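/- arXiv:1012.3597 — 6 statements merged into one kernel-verified Lean document; each statement's English description precedes it below -/
import Mathlib

section
/- Let u be a smooth divergence-free velocity field on ℝ × ℝ³ and let q, θ be smooth scalar fields that are both materially conserved: ∂ₜq + u·∇q = 0 and ∂ₜθ + u·∇θ = 0. Then the vector field B = ∇q × ∇θ satisfies the vorticity-type stretching equation in both of its equivalent forms: ∂ₜB = curl(u × B) and ∂ₜB + (u·∇)B = (B·∇)u at every point. -/
open scoped BigOperators
open Matrix

noncomputable section

/-- Points of `ℝ³`. -/
abbrev V3 := Fin 3 → ℝ

/-- Spatial partial derivative `∂f/∂xᵢ` of a scalar field. -/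
def pd (i : Fin 3) (f : V3 → ℝ) (x : V3) : ℝ := fderiv ℝ f x (Pi.single i 1)

/-- Spatial gradient `∇f`. -/
def grad3 (f : V3 → ℝ) (x : V3) : V3 := fun i => pd i f x

/-- Spatial divergence `div u`. -/
def div3 (u : V3 → V3) (x : V3) : ℝ := ∑ i, pd i (fun y => u y i) x

/-- Spatial curl `curl u`. -/
def curl3 (u : V3 → V3) (x : V3) : V3 :=
  ![pd 1 (fun y => u y 2) x - pd 2 (fun y => u y 1) x,
    pd 2 (fun y => u y 0) x - pd 0 (fun y => u y 2) x,
    pd 0 (fun y => u y 1) x - pd 1 (fun y => u y 0) x]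

/-- Directional derivative `(v·∇)w` of a vector field. -/
def adv (v : V3) (w : V3 → V3) (x : V3) : V3 := fun i => ∑ j, v j * pd j (fun y => w y i) x

/-- Spatial Laplacian of a scalar field. -/
def lap3 (f : V3 → ℝ) (x : V3) : ℝ := ∑ i, pd i (fun y => pd i f y) x

/-- Componentwise spatial Laplacian of a vector field. -/
def lapv (u : V3 → V3) (x : V3) : V3 := fun i => lap3 (fun y => u y i) x

/-- Time derivative `∂ₜf` of a time-dependent scalar field. -/
def dts (f : ℝ → V3 → ℝ) (t : ℝ) (x : V3) : ℝ := deriv (fun s => f s x) t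

/-- Time derivative `∂ₜu` of a time-dependent vector field. -/
def dtv (u : ℝ → V3 → V3) (t : ℝ) (x : V3) : V3 := fun i => deriv (fun s => u s x i) t

/-- Smoothness (C∞ jointly in time and space) of a scalar field. -/
def SmoothS (f : ℝ → V3 → ℝ) : Prop := ContDiff ℝ (⊤ : ℕ∞) (fun q : ℝ × V3 => f q.1 q.2)

/-- Smoothness (C∞ jointly in time and space) of a vector field. -/
def SmoothV (u : ℝ → V3 → V3) : Prop := ContDiff ℝ (⊤ : ℕ∞) (fun q : ℝ × V3 => u q.1 q.2)


section helpers
variable {W : Type*} [NormedAddCommGroup W] [NormedSpace ℝ W]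

lemma diff_joint {G : ℝ × V3 → W} (hF : ContDiff ℝ (⊤ : ℕ∞) G) (p : ℝ × V3) : DifferentiableAt ℝ G p :=
  (hF.differentiable (by simp)).differentiableAt

lemma diff_slice {G : ℝ × V3 → W} {t : ℝ} {x : V3} (hG : DifferentiableAt ℝ G (t, x)) :
    DifferentiableAt ℝ (fun y => G (t, y)) x := by
  have h1 : HasFDerivAt (fun y : V3 => ((t, y) : ℝ × V3)) (ContinuousLinearMap.inr ℝ ℝ V3) x :=
    hasFDerivAt_prodMk_right t x
  exact hG.comp x h1.differentiableAt

lemma fderiv_slice {G : ℝ × V3 → W} {t : ℝ} {x : V3}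
    (hG : DifferentiableAt ℝ G (t, x)) (v : V3) :
    fderiv ℝ (fun y => G (t, y)) x v = fderiv ℝ G (t, x) (0, v) := by
  have h1 : HasFDerivAt (fun y : V3 => ((t, y) : ℝ × V3)) (ContinuousLinearMap.inr ℝ ℝ V3) x :=
    hasFDerivAt_prodMk_right t x
  have h2 : HasFDerivAt (fun y => G (t, y))
      ((fderiv ℝ G (t, x)).comp (ContinuousLinearMap.inr ℝ ℝ V3)) x :=
    hG.hasFDerivAt.comp x h1
  rw [h2.fderiv]
  simp

lemma hasDerivAt_slice {G : ℝ × V3 → W} {t : ℝ} {x : V3}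
    (hG : DifferentiableAt ℝ G (t, x)) :
    HasDerivAt (fun s => G (s, x)) (fderiv ℝ G (t, x) (1, 0)) t := by
  have h1 : HasDerivAt (fun s : ℝ => ((s, x) : ℝ × V3)) ((1:ℝ), (0:V3)) t :=
    (hasDerivAt_id t).prodMk (hasDerivAt_const t x)
  exact hG.hasFDerivAt.comp_hasDerivAt t h1

lemma deriv_slice {G : ℝ × V3 → W} {t : ℝ} {x : V3}
    (hG : DifferentiableAt ℝ G (t, x)) :
    deriv (fun s => G (s, x)) t = fderiv ℝ G (t, x) (1, 0) :=
  (hasDerivAt_slice hG).deriv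

end helpers

section scalar
variable {F : ℝ × V3 → ℝ} {t : ℝ} {x : V3}

lemma phi_smooth (hF : ContDiff ℝ (⊤ : ℕ∞) F) : ContDiff ℝ (⊤ : ℕ∞) (fderiv ℝ F) :=
  hF.fderiv_right (by simp)

lemma hasDerivAt_phi (hF : ContDiff ℝ (⊤ : ℕ∞) F) (w : ℝ × V3) :
    HasDerivAt (fun s => fderiv ℝ F (s, x) w)
      (fderiv ℝ (fderiv ℝ F) (t, x) (1, 0) w) t := by
  have h := hasDerivAt_slice (G := fderiv ℝ F) (t := t) (x := x) (diff_joint (phi_smooth hF) (t, x))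
  have := h.clm_apply (hasDerivAt_const t w)
  simpa using this

lemma pd_phi (hF : ContDiff ℝ (⊤ : ℕ∞) F) (w : ℝ × V3) (i : Fin 3) :
    pd i (fun y => fderiv ℝ F (t, y) w) x
      = fderiv ℝ (fderiv ℝ F) (t, x) (0, Pi.single i 1) w := by
  unfold pd
  have hc : DifferentiableAt ℝ (fun y => fderiv ℝ F (t, y)) x :=
    diff_slice (diff_joint (phi_smooth hF) (t, x))
  rw [fderiv_clm_apply hc (differentiableAt_const w)]
  simp [fderiv_slice (diff_joint (phi_smooth hF) (t,x))]

lemma snd_symm (hF : ContDiff ℝ (⊤ : ℕ∞) F) (v w : ℝ × V3) :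
    fderiv ℝ (fderiv ℝ F) (t, x) v w = fderiv ℝ (fderiv ℝ F) (t, x) w v :=
  hF.contDiffAt.isSymmSndFDerivAt (by rw [minSmoothness_of_isRCLikeNormedField]; exact WithTop.coe_le_coe.mpr le_top) v w

end scalar

def Ed (j : Fin 3) : ℝ × V3 := (0, Pi.single j 1)
def Etd : ℝ × V3 := ((1:ℝ), (0:V3))
def UC (f : ℝ → V3 → ℝ) : ℝ × V3 → ℝ := fun p => f p.1 p.2

section pdarith
variable {f g : V3 → ℝ} {x : V3} {i : Fin 3}

lemma pd_add (hf : DifferentiableAt ℝ f x) (hg : DifferentiableAt ℝ g x) :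
    pd i (fun y => f y + g y) x = pd i f x + pd i g x := by
  unfold pd; rw [fderiv_fun_add hf hg]; simp

lemma pd_sub (hf : DifferentiableAt ℝ f x) (hg : DifferentiableAt ℝ g x) :
    pd i (fun y => f y - g y) x = pd i f x - pd i g x := by
  unfold pd; rw [fderiv_fun_sub hf hg]; simp

lemma pd_mul (hf : DifferentiableAt ℝ f x) (hg : DifferentiableAt ℝ g x) :
    pd i (fun y => f y * g y) x = pd i f x * g x + f x * pd i g x := by
  unfold pd; rw [fderiv_fun_mul hf hg]; simp; ring

lemma pd_zero : pd i (fun _ : V3 => (0:ℝ)) x = 0 := by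
  unfold pd; simp

end pdarith

section curried
variable {f : ℝ → V3 → ℝ} {t : ℝ} {x : V3}

lemma pd_slice' (hf : ContDiff ℝ (⊤ : ℕ∞) (UC f)) (s : ℝ) (y : V3) (j : Fin 3) :
    pd j (f s) y = fderiv ℝ (UC f) (s, y) (Ed j) :=
  fderiv_slice (diff_joint hf _) _

lemma dts_slice' (hf : ContDiff ℝ (⊤ : ℕ∞) (UC f)) (s : ℝ) (y : V3) :
    dts f s y = fderiv ℝ (UC f) (s, y) Etd :=
  deriv_slice (diff_joint hf _)

lemma pd_phi' (hf : ContDiff ℝ (⊤ : ℕ∞) (UC f)) (w : ℝ × V3) (i : Fin 3) :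
    pd i (fun y => fderiv ℝ (UC f) (t, y) w) x
      = fderiv ℝ (fderiv ℝ (UC f)) (t, x) (Ed i) w :=
  pd_phi hf w i

lemma dphi (hf : ContDiff ℝ (⊤ : ℕ∞) (UC f)) (w : ℝ × V3) :
    DifferentiableAt ℝ (fun y => fderiv ℝ (UC f) (t, y) w) x :=
  (diff_slice (diff_joint (phi_smooth hf) (t, x))).clm_apply (differentiableAt_const w)

lemma symm2 (hf : ContDiff ℝ (⊤ : ℕ∞) (UC f)) (v w : ℝ × V3) :
    fderiv ℝ (fderiv ℝ (UC f)) (t, x) v w = fderiv ℝ (fderiv ℝ (UC f)) (t, x) w v :=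
  snd_symm hf v w

end curried

lemma du {u : ℝ → V3 → V3} {t : ℝ} {x : V3}
    (hu : ContDiff ℝ (⊤ : ℕ∞) (fun p : ℝ × V3 => u p.1 p.2)) (m : Fin 3) :
    DifferentiableAt ℝ (fun y => u t y m) x :=
  diff_slice (diff_joint (contDiff_pi.mp hu m) (t, x))

lemma cons_expand {u : ℝ → V3 → V3} {f : ℝ → V3 → ℝ}
    (hu : ContDiff ℝ (⊤ : ℕ∞) (fun p : ℝ × V3 => u p.1 p.2)) (hf : ContDiff ℝ (⊤ : ℕ∞) (UC f))
    (hlaw : ∀ s y, dts f s y + u s y ⬝ᵥ grad3 (f s) y = 0) (t : ℝ) (x : V3) (i : Fin 3) :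
    fderiv ℝ (fderiv ℝ (UC f)) (t, x) (Ed i) Etd
      + (pd i (fun y => u t y 0) x * fderiv ℝ (UC f) (t, x) (Ed 0)
          + u t x 0 * fderiv ℝ (fderiv ℝ (UC f)) (t, x) (Ed i) (Ed 0)
        + (pd i (fun y => u t y 1) x * fderiv ℝ (UC f) (t, x) (Ed 1)
          + u t x 1 * fderiv ℝ (fderiv ℝ (UC f)) (t, x) (Ed i) (Ed 1))
        + (pd i (fun y => u t y 2) x * fderiv ℝ (UC f) (t, x) (Ed 2)
          + u t x 2 * fderiv ℝ (fderiv ℝ (UC f)) (t, x) (Ed i) (Ed 2))) = 0 := by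
  have hz : (fun y => fderiv ℝ (UC f) (t, y) Etd
      + (u t y 0 * fderiv ℝ (UC f) (t, y) (Ed 0)
        + u t y 1 * fderiv ℝ (UC f) (t, y) (Ed 1)
        + u t y 2 * fderiv ℝ (UC f) (t, y) (Ed 2))) = fun _ : V3 => (0:ℝ) := by
    funext y
    have h0 := hlaw t y
    simp only [dotProduct, grad3, Fin.sum_univ_three] at h0
    rw [← dts_slice' hf t y, ← pd_slice' hf t y 0, ← pd_slice' hf t y 1, ← pd_slice' hf t y 2]
    exact h0
  have h1 : pd i (fun y => fderiv ℝ (UC f) (t, y) Etd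
      + (u t y 0 * fderiv ℝ (UC f) (t, y) (Ed 0)
        + u t y 1 * fderiv ℝ (UC f) (t, y) (Ed 1)
        + u t y 2 * fderiv ℝ (UC f) (t, y) (Ed 2))) x = 0 := by
    rw [hz]; exact pd_zero
  rw [pd_add (dphi hf Etd)
        ((((du hu 0).fun_mul (dphi hf (Ed 0))).fun_add ((du hu 1).fun_mul (dphi hf (Ed 1)))).fun_add
          ((du hu 2).fun_mul (dphi hf (Ed 2)))),
      pd_add (((du hu 0).fun_mul (dphi hf (Ed 0))).fun_add ((du hu 1).fun_mul (dphi hf (Ed 1))))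
        ((du hu 2).fun_mul (dphi hf (Ed 2))),
      pd_add ((du hu 0).fun_mul (dphi hf (Ed 0))) ((du hu 1).fun_mul (dphi hf (Ed 1))),
      pd_mul (du hu 0) (dphi hf (Ed 0)), pd_mul (du hu 1) (dphi hf (Ed 1)),
      pd_mul (du hu 2) (dphi hf (Ed 2)),
      pd_phi' hf Etd i, pd_phi' hf (Ed 0) i, pd_phi' hf (Ed 1) i, pd_phi' hf (Ed 2) i] at h1
  linear_combination h1

set_option maxHeartbeats 2000000 in
/-- the vector `B = ∇q × ∇θ` satisfies the vorticity stretching equation. -/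
theorem stmt2
    (u : ℝ → V3 → V3) (q θ : ℝ → V3 → ℝ)
    (hu : SmoothV u) (hq : SmoothS q) (hθ : SmoothS θ)
    (hdiv : ∀ t x, div3 (u t) x = 0)
    (hqt : ∀ t x, dts q t x + u t x ⬝ᵥ grad3 (q t) x = 0)
    (hθt : ∀ t x, dts θ t x + u t x ⬝ᵥ grad3 (θ t) x = 0)
    (B : ℝ → V3 → V3)
    (hB : ∀ t x, B t x = grad3 (q t) x ⨯₃ grad3 (θ t) x) :
    (∀ t x, dtv B t x = curl3 (fun y => u t y ⨯₃ B t y) x) ∧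
    (∀ t x, dtv B t x + adv (u t x) (B t) x = adv (B t x) (u t) x) := by
  have hq' : ContDiff ℝ (⊤ : ℕ∞) (UC q) := hq
  have hθ' : ContDiff ℝ (⊤ : ℕ∞) (UC θ) := hθ
  have hu' : ContDiff ℝ (⊤ : ℕ∞) (fun p : ℝ × V3 => u p.1 p.2) := hu
  have main : ∀ t x, (dtv B t x = curl3 (fun y => u t y ⨯₃ B t y) x) ∧
      (dtv B t x + adv (u t x) (B t) x = adv (B t x) (u t) x) := by
    intro t x
    have dq : ∀ w : ℝ × V3, DifferentiableAt ℝ (fun y => fderiv ℝ (UC q) (t, y) w) x :=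
      fun w => dphi hq' w
    have dh : ∀ w : ℝ × V3, DifferentiableAt ℝ (fun y => fderiv ℝ (UC θ) (t, y) w) x :=
      fun w => dphi hθ' w
    have duu : ∀ m : Fin 3, DifferentiableAt ℝ (fun y => u t y m) x := fun m => du hu' m
    have HQ0 := cons_expand hu' hq' hqt t x 0
    have HT0 := cons_expand hu' hθ' hθt t x 0
    have HQ1 := cons_expand hu' hq' hqt t x 1
    have HT1 := cons_expand hu' hθ' hθt t x 1
    have HQ2 := cons_expand hu' hq' hqt t x 2
    have HT2 := cons_expand hu' hθ' hθt t x 2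
    have hdx := hdiv t x
    simp only [div3, Fin.sum_univ_three] at hdx
    have hmq : ∀ j : Fin 3, fderiv ℝ (fderiv ℝ (UC q)) (t, x) Etd (Ed j)
        = fderiv ℝ (fderiv ℝ (UC q)) (t, x) (Ed j) Etd := fun j => symm2 hq' Etd (Ed j)
    have hmθ : ∀ j : Fin 3, fderiv ℝ (fderiv ℝ (UC θ)) (t, x) Etd (Ed j)
        = fderiv ℝ (fderiv ℝ (UC θ)) (t, x) (Ed j) Etd := fun j => symm2 hθ' Etd (Ed j)
    have sQ10 : fderiv ℝ (fderiv ℝ (UC q)) (t, x) (Ed 1) (Ed 0)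
        = fderiv ℝ (fderiv ℝ (UC q)) (t, x) (Ed 0) (Ed 1) := symm2 hq' _ _
    have sH10 : fderiv ℝ (fderiv ℝ (UC θ)) (t, x) (Ed 1) (Ed 0)
        = fderiv ℝ (fderiv ℝ (UC θ)) (t, x) (Ed 0) (Ed 1) := symm2 hθ' _ _
    have sQ20 : fderiv ℝ (fderiv ℝ (UC q)) (t, x) (Ed 2) (Ed 0)
        = fderiv ℝ (fderiv ℝ (UC q)) (t, x) (Ed 0) (Ed 2) := symm2 hq' _ _
    have sH20 : fderiv ℝ (fderiv ℝ (UC θ)) (t, x) (Ed 2) (Ed 0)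
        = fderiv ℝ (fderiv ℝ (UC θ)) (t, x) (Ed 0) (Ed 2) := symm2 hθ' _ _
    have sQ21 : fderiv ℝ (fderiv ℝ (UC q)) (t, x) (Ed 2) (Ed 1)
        = fderiv ℝ (fderiv ℝ (UC q)) (t, x) (Ed 1) (Ed 2) := symm2 hq' _ _
    have sH21 : fderiv ℝ (fderiv ℝ (UC θ)) (t, x) (Ed 2) (Ed 1)
        = fderiv ℝ (fderiv ℝ (UC θ)) (t, x) (Ed 1) (Ed 2) := symm2 hθ' _ _
    simp only [sQ10] at HQ1
    simp only [sH10] at HT1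
    simp only [sQ20, sQ21] at HQ2
    simp only [sH20, sH21] at HT2
    have hB0 : ∀ (s : ℝ) (y : V3), B s y 0 = fderiv ℝ (UC q) (s, y) (Ed 1) * fderiv ℝ (UC θ) (s, y) (Ed 2) - fderiv ℝ (UC q) (s, y) (Ed 2) * fderiv ℝ (UC θ) (s, y) (Ed 1) := by
      intro s y
      rw [hB s y]
      show (grad3 (q s) y) 1 * (grad3 (θ s) y) 2 - (grad3 (q s) y) 2 * (grad3 (θ s) y) 1 = _
      simp only [grad3]
      rw [pd_slice' hq' s y 1, pd_slice' hq' s y 2, pd_slice' hθ' s y 1, pd_slice' hθ' s y 2]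
    have hB1 : ∀ (s : ℝ) (y : V3), B s y 1 = fderiv ℝ (UC q) (s, y) (Ed 2) * fderiv ℝ (UC θ) (s, y) (Ed 0) - fderiv ℝ (UC q) (s, y) (Ed 0) * fderiv ℝ (UC θ) (s, y) (Ed 2) := by
      intro s y
      rw [hB s y]
      show (grad3 (q s) y) 2 * (grad3 (θ s) y) 0 - (grad3 (q s) y) 0 * (grad3 (θ s) y) 2 = _
      simp only [grad3]
      rw [pd_slice' hq' s y 2, pd_slice' hq' s y 0, pd_slice' hθ' s y 2, pd_slice' hθ' s y 0]
    have hB2 : ∀ (s : ℝ) (y : V3), B s y 2 = fderiv ℝ (UC q) (s, y) (Ed 0) * fderiv ℝ (UC θ) (s, y) (Ed 1) - fderiv ℝ (UC q) (s, y) (Ed 1) * fderiv ℝ (UC θ) (s, y) (Ed 0) := by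
      intro s y
      rw [hB s y]
      show (grad3 (q s) y) 0 * (grad3 (θ s) y) 1 - (grad3 (q s) y) 1 * (grad3 (θ s) y) 0 = _
      simp only [grad3]
      rw [pd_slice' hq' s y 0, pd_slice' hq' s y 1, pd_slice' hθ' s y 0, pd_slice' hθ' s y 1]
    have hP : ∀ (j a b c d : Fin 3),
        pd j (fun y => fderiv ℝ (UC q) (t, y) (Ed a) * fderiv ℝ (UC θ) (t, y) (Ed b)
          - fderiv ℝ (UC q) (t, y) (Ed c) * fderiv ℝ (UC θ) (t, y) (Ed d)) x
        = (fderiv ℝ (fderiv ℝ (UC q)) (t, x) (Ed j) (Ed a) * fderiv ℝ (UC θ) (t, x) (Ed b)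
            + fderiv ℝ (UC q) (t, x) (Ed a) * fderiv ℝ (fderiv ℝ (UC θ)) (t, x) (Ed j) (Ed b))
          - (fderiv ℝ (fderiv ℝ (UC q)) (t, x) (Ed j) (Ed c) * fderiv ℝ (UC θ) (t, x) (Ed d)
            + fderiv ℝ (UC q) (t, x) (Ed c) * fderiv ℝ (fderiv ℝ (UC θ)) (t, x) (Ed j) (Ed d)) := by
      intro j a b c d
      rw [pd_sub ((dq (Ed a)).fun_mul (dh (Ed b))) ((dq (Ed c)).fun_mul (dh (Ed d))),
          pd_mul (dq (Ed a)) (dh (Ed b)), pd_mul (dq (Ed c)) (dh (Ed d)),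
          pd_phi' hq' (Ed a) j, pd_phi' hq' (Ed c) j, pd_phi' hθ' (Ed b) j, pd_phi' hθ' (Ed d) j]
    have hD0 : deriv (fun s => B s x 0) t
        = (fderiv ℝ (fderiv ℝ (UC q)) (t, x) Etd (Ed 1) * fderiv ℝ (UC θ) (t, x) (Ed 2)
            + fderiv ℝ (UC q) (t, x) (Ed 1) * fderiv ℝ (fderiv ℝ (UC θ)) (t, x) Etd (Ed 2))
          - (fderiv ℝ (fderiv ℝ (UC q)) (t, x) Etd (Ed 2) * fderiv ℝ (UC θ) (t, x) (Ed 1)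
            + fderiv ℝ (UC q) (t, x) (Ed 2) * fderiv ℝ (fderiv ℝ (UC θ)) (t, x) Etd (Ed 1)) := by
      rw [show (fun s => B s x 0) = (fun s => fderiv ℝ (UC q) (s, x) (Ed 1) * fderiv ℝ (UC θ) (s, x) (Ed 2) - fderiv ℝ (UC q) (s, x) (Ed 2) * fderiv ℝ (UC θ) (s, x) (Ed 1)) from funext fun s => hB0 s x]
      exact (((hasDerivAt_phi hq' (Ed 1)).mul (hasDerivAt_phi hθ' (Ed 2))).sub
        ((hasDerivAt_phi hq' (Ed 2)).mul (hasDerivAt_phi hθ' (Ed 1)))).deriv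
    have hD1 : deriv (fun s => B s x 1) t
        = (fderiv ℝ (fderiv ℝ (UC q)) (t, x) Etd (Ed 2) * fderiv ℝ (UC θ) (t, x) (Ed 0)
            + fderiv ℝ (UC q) (t, x) (Ed 2) * fderiv ℝ (fderiv ℝ (UC θ)) (t, x) Etd (Ed 0))
          - (fderiv ℝ (fderiv ℝ (UC q)) (t, x) Etd (Ed 0) * fderiv ℝ (UC θ) (t, x) (Ed 2)
            + fderiv ℝ (UC q) (t, x) (Ed 0) * fderiv ℝ (fderiv ℝ (UC θ)) (t, x) Etd (Ed 2)) := by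
      rw [show (fun s => B s x 1) = (fun s => fderiv ℝ (UC q) (s, x) (Ed 2) * fderiv ℝ (UC θ) (s, x) (Ed 0) - fderiv ℝ (UC q) (s, x) (Ed 0) * fderiv ℝ (UC θ) (s, x) (Ed 2)) from funext fun s => hB1 s x]
      exact (((hasDerivAt_phi hq' (Ed 2)).mul (hasDerivAt_phi hθ' (Ed 0))).sub
        ((hasDerivAt_phi hq' (Ed 0)).mul (hasDerivAt_phi hθ' (Ed 2)))).deriv
    have hD2 : deriv (fun s => B s x 2) t
        = (fderiv ℝ (fderiv ℝ (UC q)) (t, x) Etd (Ed 0) * fderiv ℝ (UC θ) (t, x) (Ed 1)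
            + fderiv ℝ (UC q) (t, x) (Ed 0) * fderiv ℝ (fderiv ℝ (UC θ)) (t, x) Etd (Ed 1))
          - (fderiv ℝ (fderiv ℝ (UC q)) (t, x) Etd (Ed 1) * fderiv ℝ (UC θ) (t, x) (Ed 0)
            + fderiv ℝ (UC q) (t, x) (Ed 1) * fderiv ℝ (fderiv ℝ (UC θ)) (t, x) Etd (Ed 0)) := by
      rw [show (fun s => B s x 2) = (fun s => fderiv ℝ (UC q) (s, x) (Ed 0) * fderiv ℝ (UC θ) (s, x) (Ed 1) - fderiv ℝ (UC q) (s, x) (Ed 1) * fderiv ℝ (UC θ) (s, x) (Ed 0)) from funext fun s => hB2 s x]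
      exact (((hasDerivAt_phi hq' (Ed 0)).mul (hasDerivAt_phi hθ' (Ed 1))).sub
        ((hasDerivAt_phi hq' (Ed 1)).mul (hasDerivAt_phi hθ' (Ed 0)))).deriv
    have hW0 : (fun y => (u t y ⨯₃ B t y) 0) = (fun y => u t y 1 * (fderiv ℝ (UC q) (t, y) (Ed 0) * fderiv ℝ (UC θ) (t, y) (Ed 1) - fderiv ℝ (UC q) (t, y) (Ed 1) * fderiv ℝ (UC θ) (t, y) (Ed 0)) - u t y 2 * (fderiv ℝ (UC q) (t, y) (Ed 2) * fderiv ℝ (UC θ) (t, y) (Ed 0) - fderiv ℝ (UC q) (t, y) (Ed 0) * fderiv ℝ (UC θ) (t, y) (Ed 2))) := by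
      funext y
      show u t y 1 * B t y 2 - u t y 2 * B t y 1 = _
      rw [hB2 t y, hB1 t y]
    have hW1 : (fun y => (u t y ⨯₃ B t y) 1) = (fun y => u t y 2 * (fderiv ℝ (UC q) (t, y) (Ed 1) * fderiv ℝ (UC θ) (t, y) (Ed 2) - fderiv ℝ (UC q) (t, y) (Ed 2) * fderiv ℝ (UC θ) (t, y) (Ed 1)) - u t y 0 * (fderiv ℝ (UC q) (t, y) (Ed 0) * fderiv ℝ (UC θ) (t, y) (Ed 1) - fderiv ℝ (UC q) (t, y) (Ed 1) * fderiv ℝ (UC θ) (t, y) (Ed 0))) := by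
      funext y
      show u t y 2 * B t y 0 - u t y 0 * B t y 2 = _
      rw [hB0 t y, hB2 t y]
    have hW2 : (fun y => (u t y ⨯₃ B t y) 2) = (fun y => u t y 0 * (fderiv ℝ (UC q) (t, y) (Ed 2) * fderiv ℝ (UC θ) (t, y) (Ed 0) - fderiv ℝ (UC q) (t, y) (Ed 0) * fderiv ℝ (UC θ) (t, y) (Ed 2)) - u t y 1 * (fderiv ℝ (UC q) (t, y) (Ed 1) * fderiv ℝ (UC θ) (t, y) (Ed 2) - fderiv ℝ (UC q) (t, y) (Ed 2) * fderiv ℝ (UC θ) (t, y) (Ed 1))) := by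
      funext y
      show u t y 0 * B t y 1 - u t y 1 * B t y 0 = _
      rw [hB1 t y, hB0 t y]
    have dB0 : DifferentiableAt ℝ (fun y => fderiv ℝ (UC q) (t, y) (Ed 1) * fderiv ℝ (UC θ) (t, y) (Ed 2) - fderiv ℝ (UC q) (t, y) (Ed 2) * fderiv ℝ (UC θ) (t, y) (Ed 1)) x :=
      ((dq (Ed 1)).mul (dh (Ed 2))).sub ((dq (Ed 2)).mul (dh (Ed 1)))
    have dB1 : DifferentiableAt ℝ (fun y => fderiv ℝ (UC q) (t, y) (Ed 2) * fderiv ℝ (UC θ) (t, y) (Ed 0) - fderiv ℝ (UC q) (t, y) (Ed 0) * fderiv ℝ (UC θ) (t, y) (Ed 2)) x :=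
      ((dq (Ed 2)).mul (dh (Ed 0))).sub ((dq (Ed 0)).mul (dh (Ed 2)))
    have dB2 : DifferentiableAt ℝ (fun y => fderiv ℝ (UC q) (t, y) (Ed 0) * fderiv ℝ (UC θ) (t, y) (Ed 1) - fderiv ℝ (UC q) (t, y) (Ed 1) * fderiv ℝ (UC θ) (t, y) (Ed 0)) x :=
      ((dq (Ed 0)).mul (dh (Ed 1))).sub ((dq (Ed 1)).mul (dh (Ed 0)))
    have c1_0 : dtv B t x 0 = curl3 (fun y => u t y ⨯₃ B t y) x 0 := by
      show deriv (fun s => B s x 0) t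
        = pd 1 (fun y => (u t y ⨯₃ B t y) 2) x - pd 2 (fun y => (u t y ⨯₃ B t y) 1) x
      rw [hD0, hW2, hW1]
      rw [pd_sub ((duu 0).fun_mul dB1) ((duu 1).fun_mul dB0),
          pd_mul (duu 0) dB1, pd_mul (duu 1) dB0,
          pd_sub ((duu 2).fun_mul dB0) ((duu 0).fun_mul dB2),
          pd_mul (duu 2) dB0, pd_mul (duu 0) dB2,
          hP 1 2 0 0 2,
          hP 1 1 2 2 1,
          hP 2 1 2 2 1,
          hP 2 0 1 1 0]
      beta_reduce
      simp only [hmq, hmθ, sQ10, sQ20, sQ21, sH10, sH20, sH21]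
      linear_combination fderiv ℝ (UC θ) (t, x) (Ed 2) * HQ1 - fderiv ℝ (UC θ) (t, x) (Ed 1) * HQ2 + fderiv ℝ (UC q) (t, x) (Ed 1) * HT2 - fderiv ℝ (UC q) (t, x) (Ed 2) * HT1
    have c1_1 : dtv B t x 1 = curl3 (fun y => u t y ⨯₃ B t y) x 1 := by
      show deriv (fun s => B s x 1) t
        = pd 2 (fun y => (u t y ⨯₃ B t y) 0) x - pd 0 (fun y => (u t y ⨯₃ B t y) 2) x
      rw [hD1, hW0, hW2]
      rw [pd_sub ((duu 1).fun_mul dB2) ((duu 2).fun_mul dB1),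
          pd_mul (duu 1) dB2, pd_mul (duu 2) dB1,
          pd_sub ((duu 0).fun_mul dB1) ((duu 1).fun_mul dB0),
          pd_mul (duu 0) dB1, pd_mul (duu 1) dB0,
          hP 2 0 1 1 0,
          hP 2 2 0 0 2,
          hP 0 2 0 0 2,
          hP 0 1 2 2 1]
      beta_reduce
      simp only [hmq, hmθ, sQ10, sQ20, sQ21, sH10, sH20, sH21]
      linear_combination fderiv ℝ (UC θ) (t, x) (Ed 0) * HQ2 - fderiv ℝ (UC θ) (t, x) (Ed 2) * HQ0 + fderiv ℝ (UC q) (t, x) (Ed 2) * HT0 - fderiv ℝ (UC q) (t, x) (Ed 0) * HT2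
    have c1_2 : dtv B t x 2 = curl3 (fun y => u t y ⨯₃ B t y) x 2 := by
      show deriv (fun s => B s x 2) t
        = pd 0 (fun y => (u t y ⨯₃ B t y) 1) x - pd 1 (fun y => (u t y ⨯₃ B t y) 0) x
      rw [hD2, hW1, hW0]
      rw [pd_sub ((duu 2).fun_mul dB0) ((duu 0).fun_mul dB2),
          pd_mul (duu 2) dB0, pd_mul (duu 0) dB2,
          pd_sub ((duu 1).fun_mul dB2) ((duu 2).fun_mul dB1),
          pd_mul (duu 1) dB2, pd_mul (duu 2) dB1,
          hP 0 1 2 2 1,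
          hP 0 0 1 1 0,
          hP 1 0 1 1 0,
          hP 1 2 0 0 2]
      beta_reduce
      simp only [hmq, hmθ, sQ10, sQ20, sQ21, sH10, sH20, sH21]
      linear_combination fderiv ℝ (UC θ) (t, x) (Ed 1) * HQ0 - fderiv ℝ (UC θ) (t, x) (Ed 0) * HQ1 + fderiv ℝ (UC q) (t, x) (Ed 0) * HT1 - fderiv ℝ (UC q) (t, x) (Ed 1) * HT0
    have c2_0 : dtv B t x 0 + adv (u t x) (B t) x 0 = adv (B t x) (u t) x 0 := by
      simp only [dtv, adv, Fin.sum_univ_three]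
      rw [hD0,
          show (fun y => B t y 0) = (fun y => fderiv ℝ (UC q) (t, y) (Ed 1) * fderiv ℝ (UC θ) (t, y) (Ed 2) - fderiv ℝ (UC q) (t, y) (Ed 2) * fderiv ℝ (UC θ) (t, y) (Ed 1)) from funext fun y => hB0 t y,
          hP 0 1 2 2 1, hP 1 1 2 2 1, hP 2 1 2 2 1,
          hB0 t x, hB1 t x, hB2 t x]
      simp only [hmq, hmθ, sQ10, sQ20, sQ21, sH10, sH20, sH21]
      linear_combination fderiv ℝ (UC θ) (t, x) (Ed 2) * HQ1 - fderiv ℝ (UC θ) (t, x) (Ed 1) * HQ2 + fderiv ℝ (UC q) (t, x) (Ed 1) * HT2 - fderiv ℝ (UC q) (t, x) (Ed 2) * HT1 - (fderiv ℝ (UC q) (t, x) (Ed 1) * fderiv ℝ (UC θ) (t, x) (Ed 2) - fderiv ℝ (UC q) (t, x) (Ed 2) * fderiv ℝ (UC θ) (t, x) (Ed 1)) * hdx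
    have c2_1 : dtv B t x 1 + adv (u t x) (B t) x 1 = adv (B t x) (u t) x 1 := by
      simp only [dtv, adv, Fin.sum_univ_three]
      rw [hD1,
          show (fun y => B t y 1) = (fun y => fderiv ℝ (UC q) (t, y) (Ed 2) * fderiv ℝ (UC θ) (t, y) (Ed 0) - fderiv ℝ (UC q) (t, y) (Ed 0) * fderiv ℝ (UC θ) (t, y) (Ed 2)) from funext fun y => hB1 t y,
          hP 0 2 0 0 2, hP 1 2 0 0 2, hP 2 2 0 0 2,
          hB0 t x, hB1 t x, hB2 t x]
      simp only [hmq, hmθ, sQ10, sQ20, sQ21, sH10, sH20, sH21]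
      linear_combination fderiv ℝ (UC θ) (t, x) (Ed 0) * HQ2 - fderiv ℝ (UC θ) (t, x) (Ed 2) * HQ0 + fderiv ℝ (UC q) (t, x) (Ed 2) * HT0 - fderiv ℝ (UC q) (t, x) (Ed 0) * HT2 - (fderiv ℝ (UC q) (t, x) (Ed 2) * fderiv ℝ (UC θ) (t, x) (Ed 0) - fderiv ℝ (UC q) (t, x) (Ed 0) * fderiv ℝ (UC θ) (t, x) (Ed 2)) * hdx
    have c2_2 : dtv B t x 2 + adv (u t x) (B t) x 2 = adv (B t x) (u t) x 2 := by
      simp only [dtv, adv, Fin.sum_univ_three]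
      rw [hD2,
          show (fun y => B t y 2) = (fun y => fderiv ℝ (UC q) (t, y) (Ed 0) * fderiv ℝ (UC θ) (t, y) (Ed 1) - fderiv ℝ (UC q) (t, y) (Ed 1) * fderiv ℝ (UC θ) (t, y) (Ed 0)) from funext fun y => hB2 t y,
          hP 0 0 1 1 0, hP 1 0 1 1 0, hP 2 0 1 1 0,
          hB0 t x, hB1 t x, hB2 t x]
      simp only [hmq, hmθ, sQ10, sQ20, sQ21, sH10, sH20, sH21]
      linear_combination fderiv ℝ (UC θ) (t, x) (Ed 1) * HQ0 - fderiv ℝ (UC θ) (t, x) (Ed 0) * HQ1 + fderiv ℝ (UC q) (t, x) (Ed 0) * HT1 - fderiv ℝ (UC q) (t, x) (Ed 1) * HT0 - (fderiv ℝ (UC q) (t, x) (Ed 0) * fderiv ℝ (UC θ) (t, x) (Ed 1) - fderiv ℝ (UC q) (t, x) (Ed 1) * fderiv ℝ (UC θ) (t, x) (Ed 0)) * hdx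
    constructor
    · funext i
      fin_cases i
      · exact c1_0
      · exact c1_1
      · exact c1_2
    · funext i
      fin_cases i
      · exact c2_0
      · exact c2_1
      · exact c2_2
  exact ⟨fun t x => (main t x).1, fun t x => (main t x).2⟩
end
end

section
/- Let u, p, θ be smooth fields on ℝ × ℝ³ satisfying the stratified Navier–Stokes system: div u = 0, ∂ₜu + (u·∇)u + a₀ θ k = Re⁻¹ Δu − ∇p, and ∂ₜθ + u·∇θ = (σRe)⁻¹ Δθ, where Re > 0, σ > 0, a₀ ∈ ℝ, k = (0,0,1). Set ω = curl u and q = ω·∇θ, assume q(t,x) ≠ 0 for all (t,x), and let U_q be the smooth vector field defined by q (U_q − u) = −Re⁻¹ ( Δu × ∇θ + σ⁻¹ ω Δθ ). Then θ is transported by U_q: ∂ₜθ + U_q·∇θ = 0 at every point. -/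
open scoped BigOperators
open Matrix

noncomputable section

/-- `θ` is transported by the modified velocity `U_q`. -/
theorem stmt6
    (u : ℝ → V3 → V3) (p θ : ℝ → V3 → ℝ) (Re σ a₀ : ℝ) (k : V3)
    (hRe : 0 < Re) (hσ : 0 < σ)
    (hu : SmoothV u) (hp : SmoothS p) (hθ : SmoothS θ)
    (hk : k = ![0, 0, 1])
    (hdiv : ∀ t x, div3 (u t) x = 0)
    (hns : ∀ t x,
      dtv u t x + adv (u t x) (u t) x + (a₀ * θ t x) • k
        = Re⁻¹ • lapv (u t) x - grad3 (p t) x)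
    (hθeq : ∀ t x, dts θ t x + u t x ⬝ᵥ grad3 (θ t) x = (σ * Re)⁻¹ * lap3 (θ t) x)
    (q : ℝ → V3 → ℝ)
    (hq : ∀ t x, q t x = curl3 (u t) x ⬝ᵥ grad3 (θ t) x)
    (hq0 : ∀ t x, q t x ≠ 0)
    (U : ℝ → V3 → V3) (hU : SmoothV U)
    (hUdef : ∀ t x, q t x • (U t x - u t x)
      = -(Re⁻¹ • (lapv (u t) x ⨯₃ grad3 (θ t) x + σ⁻¹ • (lap3 (θ t) x • curl3 (u t) x)))) :
    ∀ t x, dts θ t x + U t x ⬝ᵥ grad3 (θ t) x = 0 := by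
  intro t x
  set g := grad3 (θ t) x with hg
  have key := congrArg (fun v : V3 => v ⬝ᵥ g) (hUdef t x)
  simp only [smul_dotProduct, sub_dotProduct, add_dotProduct, neg_dotProduct, smul_eq_mul] at key
  have hcross : (lapv (u t) x ⨯₃ g) ⬝ᵥ g = 0 := by
    simp [crossProduct, dotProduct, Fin.sum_univ_three]; ring
  rw [hcross] at key
  have hwq : curl3 (u t) x ⬝ᵥ g = q t x := (hq t x).symm
  rw [hwq] at key
  -- key : q t x * (U t x ⬝ᵥ g - u t x ⬝ᵥ g) = -(Re⁻¹ * (0 + σ⁻¹ * (lap3 (θ t) x * q t x)))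
  have hdiff : U t x ⬝ᵥ g - u t x ⬝ᵥ g = -(Re⁻¹ * (σ⁻¹ * lap3 (θ t) x)) :=
    mul_left_cancel₀ (hq0 t x) (by rw [key]; ring)
  have hθ' := hθeq t x
  rw [← hg, show (σ * Re)⁻¹ = Re⁻¹ * σ⁻¹ by rw [mul_inv]; ring] at hθ'
  linarith [hθ', hdiff]
end
end

section
/- Let u, p be smooth fields on ℝ × ℝ³ solving the incompressible Euler equations: div u = 0 and ∂ₜu + (u·∇)u = −∇p. Set ω = curl u, define the Lamb vector 𝒟 = ω × u, the Bernoulli vector E = 𝒟 + ∇(p + ½|u|²), and ϖ = curl E. Then the Lamb vector evolves according to ∂ₜ𝒟 − u × ϖ = E × ω at every point. -/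
open scoped BigOperators
open Matrix

noncomputable section

lemma pd_addl (i : Fin 3) (f g : V3 → ℝ) (x : V3)
    (hf : DifferentiableAt ℝ f x) (hg : DifferentiableAt ℝ g x) :
    pd i (fun y => f y + g y) x = pd i f x + pd i g x := by
  simp [pd, fderiv_fun_add hf hg]

lemma pd_mull (i : Fin 3) (f g : V3 → ℝ) (x : V3)
    (hf : DifferentiableAt ℝ f x) (hg : DifferentiableAt ℝ g x) :
    pd i (fun y => f y * g y) x = pd i f x * g x + f x * pd i g x := by
  simp [pd, fderiv_fun_mul hf hg]; ring

lemma pd_cmull (i : Fin 3) (c : ℝ) (f : V3 → ℝ) (x : V3)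
    (hf : DifferentiableAt ℝ f x) :
    pd i (fun y => c * f y) x = c * pd i f x := by
  simp [pd, fderiv_const_mul hf]

lemma pd_negl (i : Fin 3) (f : V3 → ℝ) (x : V3) :
    pd i (fun y => -f y) x = - pd i f x := by
  simp [pd, fderiv_neg]

lemma pd_eq_fderivJ (F : ℝ × V3 → ℝ) (hF : Differentiable ℝ F) (t : ℝ) (x : V3) (i : Fin 3) :
    pd i (fun y => F (t, y)) x = fderiv ℝ F (t, x) (0, Pi.single i 1) := by
  have h : HasFDerivAt (fun y : V3 => F (t, y))
      ((fderiv ℝ F (t, x)).comp ((0 : V3 →L[ℝ] ℝ).prod (ContinuousLinearMap.id ℝ V3))) x :=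
    (hF (t, x)).hasFDerivAt.comp x (HasFDerivAt.prodMk (hasFDerivAt_const t x) (hasFDerivAt_id x))
  rw [pd, h.fderiv]
  simp

lemma deriv_eq_fderivJ (F : ℝ × V3 → ℝ) (hF : Differentiable ℝ F) (t : ℝ) (x : V3) :
    deriv (fun s => F (s, x)) t = fderiv ℝ F (t, x) ((1 : ℝ), (0 : V3)) := by
  have h : HasFDerivAt (fun s : ℝ => F (s, x))
      ((fderiv ℝ F (t, x)).comp ((ContinuousLinearMap.id ℝ ℝ).prod (0 : ℝ →L[ℝ] V3))) t :=
    (hF (t, x)).hasFDerivAt.comp t (HasFDerivAt.prodMk (hasFDerivAt_id t) (hasFDerivAt_const x t))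
  rw [h.hasDerivAt.deriv]
  simp

lemma smooth_fderiv_applyJ (F : ℝ × V3 → ℝ) (hF : ContDiff ℝ (⊤ : ℕ∞) F) (v : ℝ × V3) :
    ContDiff ℝ (⊤ : ℕ∞) (fun q => fderiv ℝ F q v) :=
  (hF.fderiv_right (by simp)).clm_apply contDiff_const

lemma fderiv_fderiv_applyJ (F : ℝ × V3 → ℝ) (hF : ContDiff ℝ (⊤ : ℕ∞) F) (q v w : ℝ × V3) :
    fderiv ℝ (fun z => fderiv ℝ F z v) q w = fderiv ℝ (fderiv ℝ F) q w v := by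
  have hd : DifferentiableAt ℝ (fderiv ℝ F) q :=
    ((hF.fderiv_right (m := 1) (by exact WithTop.coe_le_coe.mpr le_top)).differentiable one_ne_zero) q
  have h : HasFDerivAt (fun z => fderiv ℝ F z v)
      ((ContinuousLinearMap.apply ℝ ℝ v).comp (fderiv ℝ (fderiv ℝ F) q)) q :=
    (ContinuousLinearMap.apply ℝ ℝ v).hasFDerivAt.comp q hd.hasFDerivAt
  rw [h.fderiv]; simp

lemma fderiv2_symmJ (F : ℝ × V3 → ℝ) (hF : ContDiff ℝ (⊤ : ℕ∞) F) (q v w : ℝ × V3) :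
    fderiv ℝ (fderiv ℝ F) q v w = fderiv ℝ (fderiv ℝ F) q w v :=
  second_derivative_symmetric (fun y => ((hF.differentiable (by simp)) y).hasFDerivAt)
    ((((hF.fderiv_right (m := 1) (by exact WithTop.coe_le_coe.mpr le_top)).differentiable one_ne_zero) q).hasFDerivAt) v w

lemma mixed_partialJ (F : ℝ × V3 → ℝ) (hF : ContDiff ℝ (⊤ : ℕ∞) F) (t : ℝ) (x : V3) (i : Fin 3) :
    deriv (fun s => pd i (fun y => F (s, y)) x) t
      = pd i (fun y => deriv (fun s => F (s, y)) t) x := by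
  have hd : Differentiable ℝ F := hF.differentiable (by simp)
  have h1 : (fun s => pd i (fun y => F (s, y)) x)
      = fun s => (fun q => fderiv ℝ F q (0, Pi.single i 1)) (s, x) :=
    funext fun s => pd_eq_fderivJ F hd s x i
  have h2 : (fun y => deriv (fun s => F (s, y)) t)
      = fun y => (fun q => fderiv ℝ F q ((1 : ℝ), (0 : V3))) (t, y) :=
    funext fun y => deriv_eq_fderivJ F hd t y
  rw [h1, h2,
    deriv_eq_fderivJ _ ((smooth_fderiv_applyJ F hF _).differentiable (by simp)) t x,
    pd_eq_fderivJ _ ((smooth_fderiv_applyJ F hF _).differentiable (by simp)) t x i,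
    fderiv_fderiv_applyJ F hF, fderiv_fderiv_applyJ F hF, fderiv2_symmJ F hF]

lemma diff_pd_tJ (F : ℝ × V3 → ℝ) (hF : ContDiff ℝ (⊤ : ℕ∞) F) (x : V3) (i : Fin 3) (t : ℝ) :
    DifferentiableAt ℝ (fun s => pd i (fun y => F (s, y)) x) t := by
  have h1 : (fun s => pd i (fun y => F (s, y)) x)
      = fun s => (fun q => fderiv ℝ F q (0, Pi.single i 1)) (s, x) :=
    funext fun s => pd_eq_fderivJ F (hF.differentiable (by simp)) s x i
  rw [h1]
  exact (((smooth_fderiv_applyJ F hF _).differentiable (by simp)).comp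
    (differentiable_id.prodMk (differentiable_const x))) t

lemma smooth_slice_x (F : ℝ × V3 → ℝ) (hF : ContDiff ℝ (⊤ : ℕ∞) F) (t : ℝ) :
    ContDiff ℝ (⊤ : ℕ∞) (fun y : V3 => F (t, y)) :=
  hF.comp (contDiff_const.prodMk contDiff_id)

lemma diff_slice_t (F : ℝ × V3 → ℝ) (hF : ContDiff ℝ (⊤ : ℕ∞) F) (x : V3) :
    Differentiable ℝ (fun s : ℝ => F (s, x)) :=
  (hF.differentiable (by simp)).comp (differentiable_id.prodMk (differentiable_const x))


lemma deriv_lamb_comp (u : ℝ → V3 → V3) (hu : ContDiff ℝ (⊤ : ℕ∞) (fun q : ℝ × V3 => u q.1 q.2))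
    (t : ℝ) (x : V3) (j₁ k₁ j₂ k₂ m₁ j₃ k₃ j₄ k₄ m₂ : Fin 3) :
    deriv (fun s => (pd j₁ (fun y => u s y k₁) x - pd j₂ (fun y => u s y k₂) x) * u s x m₁
        - (pd j₃ (fun y => u s y k₃) x - pd j₄ (fun y => u s y k₄) x) * u s x m₂) t
      = (deriv (fun s => pd j₁ (fun y => u s y k₁) x) t
            - deriv (fun s => pd j₂ (fun y => u s y k₂) x) t) * u t x m₁
        + (pd j₁ (fun y => u t y k₁) x - pd j₂ (fun y => u t y k₂) x) * deriv (fun s => u s x m₁) t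
        - ((deriv (fun s => pd j₃ (fun y => u s y k₃) x) t
            - deriv (fun s => pd j₄ (fun y => u s y k₄) x) t) * u t x m₂
          + (pd j₃ (fun y => u t y k₃) x - pd j₄ (fun y => u t y k₄) x)
              * deriv (fun s => u s x m₂) t) := by
  have hUk : ∀ k : Fin 3, ContDiff ℝ (⊤ : ℕ∞) (fun q : ℝ × V3 => u q.1 q.2 k) :=
    fun k => (contDiff_pi.mp hu) k
  have hpdt : ∀ (j k : Fin 3), DifferentiableAt ℝ (fun s => pd j (fun y => u s y k) x) t :=
    fun j k => diff_pd_tJ _ (hUk k) x j t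
  have hut : ∀ k : Fin 3, DifferentiableAt ℝ (fun s => u s x k) t :=
    fun k => (diff_slice_t _ (hUk k) x) t
  have h1 := (hpdt j₁ k₁).hasDerivAt
  have h2 := (hpdt j₂ k₂).hasDerivAt
  have h3 := (hpdt j₃ k₃).hasDerivAt
  have h4 := (hpdt j₄ k₄).hasDerivAt
  have hm1 := (hut m₁).hasDerivAt
  have hm2 := (hut m₂).hasDerivAt
  have H : HasDerivAt (fun s => (pd j₁ (fun y => u s y k₁) x - pd j₂ (fun y => u s y k₂) x) * u s x m₁
        - (pd j₃ (fun y => u s y k₃) x - pd j₄ (fun y => u s y k₄) x) * u s x m₂)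
      ((deriv (fun s => pd j₁ (fun y => u s y k₁) x) t
            - deriv (fun s => pd j₂ (fun y => u s y k₂) x) t) * u t x m₁
        + (pd j₁ (fun y => u t y k₁) x - pd j₂ (fun y => u t y k₂) x) * deriv (fun s => u s x m₁) t
        - ((deriv (fun s => pd j₃ (fun y => u s y k₃) x) t
            - deriv (fun s => pd j₄ (fun y => u s y k₄) x) t) * u t x m₂
          + (pd j₃ (fun y => u t y k₃) x - pd j₄ (fun y => u t y k₄) x)
              * deriv (fun s => u s x m₂) t)) t :=
    ((h1.sub h2).mul hm1).sub ((h3.sub h4).mul hm2)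
  exact H.deriv

/-- evolution of the Lamb vector for the incompressible Euler equations. -/
theorem stmt10
    (u : ℝ → V3 → V3) (p : ℝ → V3 → ℝ)
    (hu : SmoothV u) (hp : SmoothS p)
    (hdiv : ∀ t x, div3 (u t) x = 0)
    (heuler : ∀ t x, dtv u t x + adv (u t x) (u t) x = -grad3 (p t) x)
    (D E : ℝ → V3 → V3)
    (hD : ∀ t x, D t x = curl3 (u t) x ⨯₃ u t x)
    (hE : ∀ t x, E t x
      = D t x + grad3 (fun y => p t y + (1 / 2) * (u t y ⬝ᵥ u t y)) x) :
    ∀ t x, dtv D t x - u t x ⨯₃ curl3 (E t) x = E t x ⨯₃ curl3 (u t) x := by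
  intro t x
  have hu' : ContDiff ℝ (⊤ : ℕ∞) (fun q : ℝ × V3 => u q.1 q.2) := hu
  have hp' : ContDiff ℝ (⊤ : ℕ∞) (fun q : ℝ × V3 => p q.1 q.2) := hp
  have hUk : ∀ k : Fin 3, ContDiff ℝ (⊤ : ℕ∞) (fun q : ℝ × V3 => u q.1 q.2 k) :=
    fun k => (contDiff_pi.mp hu') k
  have hux : ∀ (s : ℝ) (k : Fin 3) (z : V3), DifferentiableAt ℝ (fun y => u s y k) z :=
    fun s k z => (smooth_slice_x _ (hUk k) s).differentiable (by simp) z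
  have hpx : ∀ (s : ℝ) (z : V3), DifferentiableAt ℝ (fun y => p s y) z :=
    fun s z => (smooth_slice_x _ hp' s).differentiable (by simp) z
  have hut : ∀ k : Fin 3, DifferentiableAt ℝ (fun s => u s x k) t :=
    fun k => (diff_slice_t _ (hUk k) x) t
  -- E = -∂ₜu pointwise
  have hgradq : ∀ (z : V3) (j : Fin 3), pd j (fun y => p t y + 1 / 2 * (u t y ⬝ᵥ u t y)) z
        = pd j (fun y => p t y) z
          + (u t z 0 * pd j (fun y => u t y 0) z + u t z 1 * pd j (fun y => u t y 1) z
            + u t z 2 * pd j (fun y => u t y 2) z) := by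
      intro z j
      have hfp := (hpx t z).hasFDerivAt
      have h0 := (hux t 0 z).hasFDerivAt
      have h1 := (hux t 1 z).hasFDerivAt
      have h2 := (hux t 2 z).hasFDerivAt
      have H : HasFDerivAt (fun y => p t y + 1 / 2 * (u t y ⬝ᵥ u t y))
          (fderiv ℝ (fun y => p t y) z +
            (1 / 2 : ℝ) • ((u t z 0 • fderiv ℝ (fun y => u t y 0) z
                + u t z 0 • fderiv ℝ (fun y => u t y 0) z) +
              ((u t z 1 • fderiv ℝ (fun y => u t y 1) z
                + u t z 1 • fderiv ℝ (fun y => u t y 1) z) +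
               (u t z 2 • fderiv ℝ (fun y => u t y 2) z
                + u t z 2 • fderiv ℝ (fun y => u t y 2) z)))) z := by
        have e1 : (fun y : V3 => p t y + 1 / 2 * (u t y ⬝ᵥ u t y))
            = fun y => p t y + 1 / 2 * (u t y 0 * u t y 0
                + (u t y 1 * u t y 1 + u t y 2 * u t y 2)) := by
          funext y; simp [dotProduct, Fin.sum_univ_three, add_assoc]
        rw [e1]
        exact hfp.add (((h0.mul h0).add ((h1.mul h1).add (h2.mul h2))).const_mul (1 / 2))
      rw [pd, H.fderiv]
      simp [pd]
      ring
  have hE0 : ∀ z : V3, E t z 0 = - deriv (fun s => u s z 0) t := by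
    intro z
    have heq := congrFun (heuler t z) 0
    simp only [Pi.add_apply, Pi.neg_apply, dtv, adv, grad3, Fin.sum_univ_three] at heq
    rw [hE t z, hD t z, cross_apply]
    simp only [Pi.add_apply, grad3, curl3, Matrix.cons_val_zero, Matrix.cons_val_one,
      Matrix.head_cons, Matrix.cons_val_two, Matrix.tail_cons]
    rw [hgradq z 0]
    linarith [heq]
  have hE1 : ∀ z : V3, E t z 1 = - deriv (fun s => u s z 1) t := by
    intro z
    have heq := congrFun (heuler t z) 1
    simp only [Pi.add_apply, Pi.neg_apply, dtv, adv, grad3, Fin.sum_univ_three] at heq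
    rw [hE t z, hD t z, cross_apply]
    simp only [Pi.add_apply, grad3, curl3, Matrix.cons_val_zero, Matrix.cons_val_one,
      Matrix.head_cons, Matrix.cons_val_two, Matrix.tail_cons]
    rw [hgradq z 1]
    linarith [heq]
  have hE2 : ∀ z : V3, E t z 2 = - deriv (fun s => u s z 2) t := by
    intro z
    have heq := congrFun (heuler t z) 2
    simp only [Pi.add_apply, Pi.neg_apply, dtv, adv, grad3, Fin.sum_univ_three] at heq
    rw [hE t z, hD t z, cross_apply]
    simp only [Pi.add_apply, grad3, curl3, Matrix.cons_val_zero, Matrix.cons_val_one,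
      Matrix.head_cons, Matrix.cons_val_two, Matrix.tail_cons]
    rw [hgradq z 2]
    linarith [heq]
  have hEfun : ∀ (z : V3) (i : Fin 3), E t z i = - deriv (fun s => u s z i) t := by
    intro z i
    fin_cases i
    · exact hE0 z
    · exact hE1 z
    · exact hE2 z
  have hder_u : ∀ k : Fin 3, deriv (fun s => u s x k) t = - E t x k := by
    intro k; have := hEfun x k; linarith
  have hder_pd : ∀ j k : Fin 3, deriv (fun s => pd j (fun y => u s y k) x) t
      = - pd j (fun y => E t y k) x := by
    intro j k
    have h1 : deriv (fun s => pd j (fun y => u s y k) x) t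
        = pd j (fun y => deriv (fun s => u s y k) t) x :=
      mixed_partialJ (fun q => u q.1 q.2 k) (hUk k) t x j
    rw [h1]
    have h2 : (fun y => deriv (fun s => u s y k) t) = fun y => -(E t y k) := by
      funext z
      have := hEfun z k
      linarith
    rw [h2, pd_negl]
  have hD0fun : (fun s => D s x 0) = fun s =>
      (pd 2 (fun y => u s y 0) x - pd 0 (fun y => u s y 2) x) * u s x 2
      - (pd 0 (fun y => u s y 1) x - pd 1 (fun y => u s y 0) x) * u s x 1 := by
    funext s; rw [hD s x, cross_apply]; simp [curl3]
  have hD1fun : (fun s => D s x 1) = fun s =>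
      (pd 0 (fun y => u s y 1) x - pd 1 (fun y => u s y 0) x) * u s x 0
      - (pd 1 (fun y => u s y 2) x - pd 2 (fun y => u s y 1) x) * u s x 2 := by
    funext s; rw [hD s x, cross_apply]; simp [curl3]
  have hD2fun : (fun s => D s x 2) = fun s =>
      (pd 1 (fun y => u s y 2) x - pd 2 (fun y => u s y 1) x) * u s x 1
      - (pd 2 (fun y => u s y 0) x - pd 0 (fun y => u s y 2) x) * u s x 0 := by
    funext s; rw [hD s x, cross_apply]; simp [curl3]
  have comp0 : dtv D t x 0 - (u t x ⨯₃ curl3 (E t) x) 0 = (E t x ⨯₃ curl3 (u t) x) 0 := by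
    have hdt : dtv D t x 0 = deriv (fun s => D s x 0) t := rfl
    rw [hdt, hD0fun, deriv_lamb_comp u hu' t x 2 0 0 2 2 0 1 1 0 1,
      hder_pd 2 0, hder_pd 0 2, hder_u 2, hder_pd 0 1, hder_pd 1 0, hder_u 1,
      cross_apply, cross_apply]
    simp only [curl3, Matrix.cons_val_zero, Matrix.cons_val_one, Matrix.head_cons,
      Matrix.cons_val_two, Matrix.tail_cons]
    ring
  have comp1 : dtv D t x 1 - (u t x ⨯₃ curl3 (E t) x) 1 = (E t x ⨯₃ curl3 (u t) x) 1 := by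
    have hdt : dtv D t x 1 = deriv (fun s => D s x 1) t := rfl
    rw [hdt, hD1fun, deriv_lamb_comp u hu' t x 0 1 1 0 0 1 2 2 1 2,
      hder_pd 0 1, hder_pd 1 0, hder_u 0, hder_pd 1 2, hder_pd 2 1, hder_u 2,
      cross_apply, cross_apply]
    simp only [curl3, Matrix.cons_val_zero, Matrix.cons_val_one, Matrix.head_cons,
      Matrix.cons_val_two, Matrix.tail_cons]
    ring
  have comp2 : dtv D t x 2 - (u t x ⨯₃ curl3 (E t) x) 2 = (E t x ⨯₃ curl3 (u t) x) 2 := by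
    have hdt : dtv D t x 2 = deriv (fun s => D s x 2) t := rfl
    rw [hdt, hD2fun, deriv_lamb_comp u hu' t x 1 2 2 1 1 2 0 0 2 0,
      hder_pd 1 2, hder_pd 2 1, hder_u 1, hder_pd 2 0, hder_pd 0 2, hder_u 0,
      cross_apply, cross_apply]
    simp only [curl3, Matrix.cons_val_zero, Matrix.cons_val_one, Matrix.head_cons,
      Matrix.cons_val_two, Matrix.tail_cons]
    ring
  funext i
  fin_cases i
  · exact comp0
  · exact comp1
  · exact comp2
end
end

section
/- (Commutator form of the Lamb-vector stretching equation.) Let u, p be smooth fields on ℝ × ℝ³ solving the incompressible Euler equations: div u = 0 and ∂ₜu + (u·∇)u = −∇p. Set ω = curl u, 𝒟 = ω × u, E = 𝒟 + ∇(p + ½|u|²), and ϖ = curl E. Then ∂ₜϖ + [u, ϖ] = [ω, E] at every point, where the bracket of vector fields is [a, b] = (a·∇)b − (b·∇)a. -/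
open scoped BigOperators
open Matrix

noncomputable section

/-- The commutator `[a, b] = (a·∇)b − (b·∇)a` of vector fields. -/
def vbracket (a b : V3 → V3) (x : V3) : V3 := adv (a x) b x - adv (b x) a x

namespace S14

abbrev Q := ℝ × V3

def dv (v : Q) (G : Q → ℝ) (q : Q) : ℝ := fderiv ℝ G q v

def et : Q := (1, 0)
def ex (i : Fin 3) : Q := (0, Pi.single i 1)

lemma diffAt {G : Q → ℝ} (hG : ContDiff ℝ (⊤ : ℕ∞) G) (q : Q) : DifferentiableAt ℝ G q :=
  (hG.differentiable (by simp)) q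

lemma dv_smooth {G : Q → ℝ} (hG : ContDiff ℝ (⊤ : ℕ∞) G) (v : Q) : ContDiff ℝ (⊤ : ℕ∞) (dv v G) :=
  (hG.fderiv_right ((by simp))).clm_apply contDiff_const

lemma dv_add {A B : Q → ℝ} (hA : ContDiff ℝ (⊤ : ℕ∞) A) (hB : ContDiff ℝ (⊤ : ℕ∞) B) (v : Q) (q : Q) :
    dv v (fun q => A q + B q) q = dv v A q + dv v B q := by
  simp [dv, fderiv_fun_add (diffAt hA q) (diffAt hB q)]

lemma dv_sub {A B : Q → ℝ} (hA : ContDiff ℝ (⊤ : ℕ∞) A) (hB : ContDiff ℝ (⊤ : ℕ∞) B) (v : Q) (q : Q) :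
    dv v (fun q => A q - B q) q = dv v A q - dv v B q := by
  simp [dv, fderiv_fun_sub (diffAt hA q) (diffAt hB q)]

lemma dv_neg {A : Q → ℝ} (v : Q) (q : Q) :
    dv v (fun q => -(A q)) q = -(dv v A q) := by
  simp [dv, fderiv_neg]

lemma dv_mul {A B : Q → ℝ} (hA : ContDiff ℝ (⊤ : ℕ∞) A) (hB : ContDiff ℝ (⊤ : ℕ∞) B) (v : Q) (q : Q) :
    dv v (fun q => A q * B q) q = A q * dv v B q + B q * dv v A q := by
  simp [dv, fderiv_fun_mul (diffAt hA q) (diffAt hB q)]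

lemma dv_const_mul {A : Q → ℝ} (hA : ContDiff ℝ (⊤ : ℕ∞) A) (c : ℝ) (v : Q) (q : Q) :
    dv v (fun q => c * A q) q = c * dv v A q := by
  simp [dv, fderiv_const_mul (diffAt hA q)]

lemma dv_comm {G : Q → ℝ} (hG : ContDiff ℝ (⊤ : ℕ∞) G) (v w : Q) (q : Q) :
    dv v (dv w G) q = dv w (dv v G) q := by
  have hdf : ContDiff ℝ (⊤ : ℕ∞) (fderiv ℝ G) := hG.fderiv_right (by simp)
  have h1 : ∀ y, HasFDerivAt G (fderiv ℝ G y) y := fun y => (diffAt hG y).hasFDerivAt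
  have h2 : HasFDerivAt (fderiv ℝ G) (fderiv ℝ (fderiv ℝ G) q) q :=
    ((hdf.differentiable (by simp)) q).hasFDerivAt
  have key : ∀ a b : Q, dv a (dv b G) q = (fderiv ℝ (fderiv ℝ G) q a) b := by
    intro a b
    rw [show dv a (dv b G) q = fderiv ℝ (fun y => (fderiv ℝ G y) b) q a from rfl]
    rw [fderiv_clm_apply ((hdf.differentiable (by simp)) q) (differentiableAt_const b)]
    simp
  rw [key v w, key w v, second_derivative_symmetric h1 h2 w v]

lemma dv_sum3mul {A0 B0 A1 B1 A2 B2 : Q → ℝ}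
    (hA0 : ContDiff ℝ (⊤ : ℕ∞) A0) (hB0 : ContDiff ℝ (⊤ : ℕ∞) B0)
    (hA1 : ContDiff ℝ (⊤ : ℕ∞) A1) (hB1 : ContDiff ℝ (⊤ : ℕ∞) B1)
    (hA2 : ContDiff ℝ (⊤ : ℕ∞) A2) (hB2 : ContDiff ℝ (⊤ : ℕ∞) B2) (v : Q) (q : Q) :
    dv v (fun q => A0 q * B0 q + A1 q * B1 q + A2 q * B2 q) q
      = A0 q * dv v B0 q + B0 q * dv v A0 q + A1 q * dv v B1 q + B1 q * dv v A1 q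
        + A2 q * dv v B2 q + B2 q * dv v A2 q := by
  rw [dv_add ((hA0.mul hB0).add (hA1.mul hB1)) (hA2.mul hB2),
    dv_add (hA0.mul hB0) (hA1.mul hB1), dv_mul hA0 hB0, dv_mul hA1 hB1, dv_mul hA2 hB2]
  ring

lemma dv_euler_shape {A0 B0 A1 B1 A2 B2 C : Q → ℝ}
    (hA0 : ContDiff ℝ (⊤ : ℕ∞) A0) (hB0 : ContDiff ℝ (⊤ : ℕ∞) B0)
    (hA1 : ContDiff ℝ (⊤ : ℕ∞) A1) (hB1 : ContDiff ℝ (⊤ : ℕ∞) B1)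
    (hA2 : ContDiff ℝ (⊤ : ℕ∞) A2) (hB2 : ContDiff ℝ (⊤ : ℕ∞) B2)
    (hC : ContDiff ℝ (⊤ : ℕ∞) C) (v : Q) (q : Q) :
    dv v (fun q => -(A0 q * B0 q + A1 q * B1 q + A2 q * B2 q) - C q) q
      = -(A0 q * dv v B0 q + B0 q * dv v A0 q + A1 q * dv v B1 q + B1 q * dv v A1 q
          + A2 q * dv v B2 q + B2 q * dv v A2 q) - dv v C q := by
  rw [dv_sub (((hA0.mul hB0).add (hA1.mul hB1)).add (hA2.mul hB2)).neg hC,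
    dv_neg (A := fun q => A0 q * B0 q + A1 q * B1 q + A2 q * B2 q),
    dv_sum3mul hA0 hB0 hA1 hB1 hA2 hB2]

lemma dv_X_shape {A0 B0 A1 B1 A2 B2 C0 D0 C1 D1 C2 D2 : Q → ℝ}
    (hA0 : ContDiff ℝ (⊤ : ℕ∞) A0) (hB0 : ContDiff ℝ (⊤ : ℕ∞) B0)
    (hA1 : ContDiff ℝ (⊤ : ℕ∞) A1) (hB1 : ContDiff ℝ (⊤ : ℕ∞) B1)
    (hA2 : ContDiff ℝ (⊤ : ℕ∞) A2) (hB2 : ContDiff ℝ (⊤ : ℕ∞) B2)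
    (hC0 : ContDiff ℝ (⊤ : ℕ∞) C0) (hD0 : ContDiff ℝ (⊤ : ℕ∞) D0)
    (hC1 : ContDiff ℝ (⊤ : ℕ∞) C1) (hD1 : ContDiff ℝ (⊤ : ℕ∞) D1)
    (hC2 : ContDiff ℝ (⊤ : ℕ∞) C2) (hD2 : ContDiff ℝ (⊤ : ℕ∞) D2) (v : Q) (q : Q) :
    dv v (fun q => (A0 q * B0 q + A1 q * B1 q + A2 q * B2 q)
        - (C0 q * D0 q + C1 q * D1 q + C2 q * D2 q)) q
      = (A0 q * dv v B0 q + B0 q * dv v A0 q + A1 q * dv v B1 q + B1 q * dv v A1 q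
          + A2 q * dv v B2 q + B2 q * dv v A2 q)
        - (C0 q * dv v D0 q + D0 q * dv v C0 q + C1 q * dv v D1 q + D1 q * dv v C1 q
          + C2 q * dv v D2 q + D2 q * dv v C2 q) := by
  rw [dv_sub (((hA0.mul hB0).add (hA1.mul hB1)).add (hA2.mul hB2))
      (((hC0.mul hD0).add (hC1.mul hD1)).add (hC2.mul hD2)),
    dv_sum3mul hA0 hB0 hA1 hB1 hA2 hB2, dv_sum3mul hC0 hD0 hC1 hD1 hC2 hD2]

lemma pd_bridge {G : Q → ℝ} (hG : ContDiff ℝ (⊤ : ℕ∞) G) {f : ℝ → V3 → ℝ}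
    (hf : ∀ t y, f t y = G (t, y)) (i : Fin 3) (t : ℝ) (x : V3) :
    pd i (fun y => f t y) x = dv (ex i) G (t, x) := by
  have hfe : (fun y => f t y) = (fun y => G (t, y)) := funext (hf t)
  have h1 : HasFDerivAt (fun y : V3 => (t, y))
      (((0 : V3 →L[ℝ] ℝ).prod (ContinuousLinearMap.id ℝ V3))) x :=
    HasFDerivAt.prodMk (hasFDerivAt_const t x) (hasFDerivAt_id x)
  have h2 : HasFDerivAt (fun y => G (t, y))
      ((fderiv ℝ G (t, x)).comp ((0 : V3 →L[ℝ] ℝ).prod (ContinuousLinearMap.id ℝ V3))) x :=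
    HasFDerivAt.comp x (diffAt hG (t, x)).hasFDerivAt h1
  rw [pd, hfe, h2.fderiv]
  simp [dv, ex]

lemma dt_bridge {G : Q → ℝ} (hG : ContDiff ℝ (⊤ : ℕ∞) G) {f : ℝ → V3 → ℝ}
    (hf : ∀ t y, f t y = G (t, y)) (t : ℝ) (x : V3) :
    deriv (fun s => f s x) t = dv et G (t, x) := by
  have hfe : (fun s => f s x) = (fun s => G (s, x)) := funext (fun s => hf s x)
  have h1 : HasFDerivAt (fun s : ℝ => (s, x))
      ((ContinuousLinearMap.id ℝ ℝ).prod (0 : ℝ →L[ℝ] V3)) t :=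
    HasFDerivAt.prodMk (hasFDerivAt_id t) (hasFDerivAt_const x t)
  have h2 : HasFDerivAt (fun s => G (s, x))
      ((fderiv ℝ G (t, x)).comp ((ContinuousLinearMap.id ℝ ℝ).prod (0 : ℝ →L[ℝ] V3))) t :=
    HasFDerivAt.comp t (diffAt hG (t, x)).hasFDerivAt h1
  rw [hfe, h2.hasDerivAt.deriv]
  simp [dv, et]

def UJ (u : ℝ → V3 → V3) (i : Fin 3) : Q → ℝ := fun q => u q.1 q.2 i
def PJ (p : ℝ → V3 → ℝ) : Q → ℝ := fun q => p q.1 q.2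
def omJ (u : ℝ → V3 → V3) : Fin 3 → Q → ℝ :=
  ![fun q => dv (ex 1) (UJ u 2) q - dv (ex 2) (UJ u 1) q,
    fun q => dv (ex 2) (UJ u 0) q - dv (ex 0) (UJ u 2) q,
    fun q => dv (ex 0) (UJ u 1) q - dv (ex 1) (UJ u 0) q]
def EJ (u : ℝ → V3 → V3) (i : Fin 3) : Q → ℝ := fun q => -(dv et (UJ u i) q)
def XJ (u : ℝ → V3 → V3) (i : Fin 3) : Q → ℝ := fun q =>
  (UJ u 0 q * dv (ex 0) (omJ u i) q + UJ u 1 q * dv (ex 1) (omJ u i) q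
    + UJ u 2 q * dv (ex 2) (omJ u i) q)
  - (omJ u 0 q * dv (ex 0) (UJ u i) q + omJ u 1 q * dv (ex 1) (UJ u i) q
    + omJ u 2 q * dv (ex 2) (UJ u i) q)
def GG (u : ℝ → V3 → V3) (p : ℝ → V3 → ℝ) : Q → ℝ := fun q =>
  PJ p q + (1 / 2) * (UJ u 0 q * UJ u 0 q + UJ u 1 q * UJ u 1 q + UJ u 2 q * UJ u 2 q)

end S14

open S14 in
/-- commutator form of the Lamb-vector stretching equation. -/
theorem stmt14
    (u : ℝ → V3 → V3) (p : ℝ → V3 → ℝ)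
    (hu : SmoothV u) (hp : SmoothS p)
    (hdiv : ∀ t x, div3 (u t) x = 0)
    (heuler : ∀ t x, dtv u t x + adv (u t x) (u t) x = -grad3 (p t) x)
    (D E W : ℝ → V3 → V3)
    (hD : ∀ t x, D t x = crossProduct (curl3 (u t) x) (u t x))
    (hE : ∀ t x, E t x
      = D t x + grad3 (fun y => p t y + (1 / 2) * (u t y ⬝ᵥ u t y)) x)
    (hW : ∀ t x, W t x = curl3 (E t) x) :
    ∀ t x, dtv W t x + vbracket (u t) (W t) x
      = vbracket (fun y => curl3 (u t) y) (E t) x := by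
  -- smoothness of the joint fields
  have hUs : ∀ i, ContDiff ℝ (⊤ : ℕ∞) (UJ u i) := fun i => contDiff_pi.mp hu i
  have hP : ContDiff ℝ (⊤ : ℕ∞) (PJ p) := hp
  have homs : ∀ i, ContDiff ℝ (⊤ : ℕ∞) (omJ u i) := by
    intro i
    fin_cases i
    · exact (dv_smooth (hUs 2) (ex 1)).sub (dv_smooth (hUs 1) (ex 2))
    · exact (dv_smooth (hUs 0) (ex 2)).sub (dv_smooth (hUs 2) (ex 0))
    · exact (dv_smooth (hUs 1) (ex 0)).sub (dv_smooth (hUs 0) (ex 1))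
  have hEs : ∀ i, ContDiff ℝ (⊤ : ℕ∞) (EJ u i) := fun i => (dv_smooth (hUs i) et).neg
  have hXs : ∀ i, ContDiff ℝ (⊤ : ℕ∞) (XJ u i) := fun i =>
    ((((hUs 0).mul (dv_smooth (homs i) (ex 0))).add
        ((hUs 1).mul (dv_smooth (homs i) (ex 1)))).add
      ((hUs 2).mul (dv_smooth (homs i) (ex 2)))).sub
    ((((homs 0).mul (dv_smooth (hUs i) (ex 0))).add
        ((homs 1).mul (dv_smooth (hUs i) (ex 1)))).add
      ((homs 2).mul (dv_smooth (hUs i) (ex 2))))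
  have hGG : ContDiff ℝ (⊤ : ℕ∞) (GG u p) :=
    hP.add (contDiff_const.mul ((((hUs 0).mul (hUs 0)).add ((hUs 1).mul (hUs 1))).add
      ((hUs 2).mul (hUs 2))))
  -- bridges
  have hUq : ∀ (t : ℝ) (x : V3) (j : Fin 3), u t x j = UJ u j (t, x) := fun _ _ _ => rfl
  have bu : ∀ (j i : Fin 3) (t : ℝ) (x : V3),
      pd j (fun y => u t y i) x = dv (ex j) (UJ u i) (t, x) :=
    fun j i t x => pd_bridge (hUs i) (fun _ _ => rfl) j t x
  have but : ∀ (i : Fin 3) (t : ℝ) (x : V3),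
      deriv (fun s => u s x i) t = dv et (UJ u i) (t, x) :=
    fun i t x => dt_bridge (hUs i) (fun _ _ => rfl) t x
  have bp : ∀ (j : Fin 3) (t : ℝ) (x : V3), pd j (p t) x = dv (ex j) (PJ p) (t, x) :=
    fun j t x => pd_bridge hP (fun _ _ => rfl) j t x
  have bju : ∀ (j i : Fin 3) (t : ℝ) (x : V3),
      pd j (fun y => UJ u i (t, y)) x = dv (ex j) (UJ u i) (t, x) :=
    fun j i t x => pd_bridge (hUs i) (fun _ _ => rfl) j t x
  have bjX : ∀ (j i : Fin 3) (t : ℝ) (x : V3),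
      pd j (fun y => XJ u i (t, y)) x = dv (ex j) (XJ u i) (t, x) :=
    fun j i t x => pd_bridge (hXs i) (fun _ _ => rfl) j t x
  have bjE : ∀ (j i : Fin 3) (t : ℝ) (x : V3),
      pd j (fun y => EJ u i (t, y)) x = dv (ex j) (EJ u i) (t, x) :=
    fun j i t x => pd_bridge (hEs i) (fun _ _ => rfl) j t x
  have bjom : ∀ (j i : Fin 3) (t : ℝ) (x : V3),
      pd j (fun y => omJ u i (t, y)) x = dv (ex j) (omJ u i) (t, x) :=
    fun j i t x => pd_bridge (homs i) (fun _ _ => rfl) j t x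
  have bXt : ∀ (i : Fin 3) (t : ℝ) (x : V3),
      deriv (fun s => XJ u i (s, x)) t = dv et (XJ u i) (t, x) :=
    fun i t x => dt_bridge (hXs i) (fun _ _ => rfl) t x
  -- pointwise values and derivatives of the joint vorticity
  have homv0 : ∀ q : Q, omJ u 0 q = dv (ex 1) (UJ u 2) q - dv (ex 2) (UJ u 1) q := fun _ => rfl
  have homv1 : ∀ q : Q, omJ u 1 q = dv (ex 2) (UJ u 0) q - dv (ex 0) (UJ u 2) q := fun _ => rfl
  have homv2 : ∀ q : Q, omJ u 2 q = dv (ex 0) (UJ u 1) q - dv (ex 1) (UJ u 0) q := fun _ => rfl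
  have homd0 : ∀ (v q : Q),
      dv v (omJ u 0) q = dv v (dv (ex 1) (UJ u 2)) q - dv v (dv (ex 2) (UJ u 1)) q := by
    intro v q
    rw [show omJ u 0 = fun q => dv (ex 1) (UJ u 2) q - dv (ex 2) (UJ u 1) q from rfl,
      dv_sub (dv_smooth (hUs 2) (ex 1)) (dv_smooth (hUs 1) (ex 2))]
  have homd1 : ∀ (v q : Q),
      dv v (omJ u 1) q = dv v (dv (ex 2) (UJ u 0)) q - dv v (dv (ex 0) (UJ u 2)) q := by
    intro v q
    rw [show omJ u 1 = fun q => dv (ex 2) (UJ u 0) q - dv (ex 0) (UJ u 2) q from rfl,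
      dv_sub (dv_smooth (hUs 0) (ex 2)) (dv_smooth (hUs 2) (ex 0))]
  have homd2 : ∀ (v q : Q),
      dv v (omJ u 2) q = dv v (dv (ex 0) (UJ u 1)) q - dv v (dv (ex 1) (UJ u 0)) q := by
    intro v q
    rw [show omJ u 2 = fun q => dv (ex 0) (UJ u 1) q - dv (ex 1) (UJ u 0) q from rfl,
      dv_sub (dv_smooth (hUs 1) (ex 0)) (dv_smooth (hUs 0) (ex 1))]
  -- divergence-free at the joint level
  have hdivJ : ∀ q : Q,
      dv (ex 0) (UJ u 0) q + dv (ex 1) (UJ u 1) q + dv (ex 2) (UJ u 2) q = 0 := by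
    intro q
    have h := hdiv q.1 q.2
    simp only [div3, Fin.sum_univ_three] at h
    rw [bu 0 0 q.1 q.2, bu 1 1 q.1 q.2, bu 2 2 q.1 q.2] at h
    simpa only [Prod.mk.eta] using h
  -- Euler equation at the joint level
  have hA : ∀ (i : Fin 3) (q : Q), dv et (UJ u i) q
      = -(UJ u 0 q * dv (ex 0) (UJ u i) q + UJ u 1 q * dv (ex 1) (UJ u i) q
          + UJ u 2 q * dv (ex 2) (UJ u i) q) - dv (ex i) (PJ p) q := by
    intro i q
    have h := congrFun (heuler q.1 q.2) i
    simp only [Pi.add_apply, Pi.neg_apply, dtv, adv, grad3, Fin.sum_univ_three] at h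
    rw [but i q.1 q.2, bu 0 i q.1 q.2, bu 1 i q.1 q.2, bu 2 i q.1 q.2, bp i q.1 q.2] at h
    simp only [hUq, Prod.mk.eta] at h
    linear_combination h
  have hAfun : ∀ i : Fin 3, dv et (UJ u i)
      = fun q => -(UJ u 0 q * dv (ex 0) (UJ u i) q + UJ u 1 q * dv (ex 1) (UJ u i) q
          + UJ u 2 q * dv (ex 2) (UJ u i) q) - dv (ex i) (PJ p) q :=
    fun i => funext (hA i)
  -- curl components
  have hcurl : ∀ (t : ℝ) (x : V3) (i : Fin 3), curl3 (u t) x i = omJ u i (t, x) := by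
    intro t x i
    fin_cases i
    · show curl3 (u t) x 0 = omJ u 0 (t, x)
      rw [show curl3 (u t) x 0 = pd 1 (fun y => u t y 2) x - pd 2 (fun y => u t y 1) x from rfl,
        bu 1 2 t x, bu 2 1 t x, homv0]
    · show curl3 (u t) x 1 = omJ u 1 (t, x)
      rw [show curl3 (u t) x 1 = pd 2 (fun y => u t y 0) x - pd 0 (fun y => u t y 2) x from rfl,
        bu 2 0 t x, bu 0 2 t x, homv1]
    · show curl3 (u t) x 2 = omJ u 2 (t, x)
      rw [show curl3 (u t) x 2 = pd 0 (fun y => u t y 1) x - pd 1 (fun y => u t y 0) x from rfl,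
        bu 0 1 t x, bu 1 0 t x, homv2]
  -- the Bernoulli-pressure gradient
  have hgb : ∀ (i : Fin 3) (t : ℝ) (x : V3),
      pd i (fun y => p t y + (1 / 2) * (u t y ⬝ᵥ u t y)) x = dv (ex i) (GG u p) (t, x) :=
    fun i t x => pd_bridge (f := fun t y => p t y + (1 / 2) * (u t y ⬝ᵥ u t y)) hGG
      (fun t y => by simp [GG, PJ, UJ, dotProduct, Fin.sum_univ_three]) i t x
  have hgexp : ∀ (i : Fin 3) (q : Q), dv (ex i) (GG u p) q
      = dv (ex i) (PJ p) q + (1 / 2) * (UJ u 0 q * dv (ex i) (UJ u 0) q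
          + UJ u 0 q * dv (ex i) (UJ u 0) q + UJ u 1 q * dv (ex i) (UJ u 1) q
          + UJ u 1 q * dv (ex i) (UJ u 1) q + UJ u 2 q * dv (ex i) (UJ u 2) q
          + UJ u 2 q * dv (ex i) (UJ u 2) q) := by
    intro i q
    rw [show GG u p = fun q => PJ p q + (1 / 2) * (UJ u 0 q * UJ u 0 q + UJ u 1 q * UJ u 1 q
        + UJ u 2 q * UJ u 2 q) from rfl,
      dv_add hP (contDiff_const.mul ((((hUs 0).mul (hUs 0)).add ((hUs 1).mul (hUs 1))).add
        ((hUs 2).mul (hUs 2)))),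
      dv_const_mul ((((hUs 0).mul (hUs 0)).add ((hUs 1).mul (hUs 1))).add
        ((hUs 2).mul (hUs 2))) (1 / 2),
      dv_sum3mul (hUs 0) (hUs 0) (hUs 1) (hUs 1) (hUs 2) (hUs 2)]
  -- E = -∂ₜu at the joint level
  have hEeq : ∀ (t : ℝ) (x : V3) (i : Fin 3), E t x i = EJ u i (t, x) := by
    intro t x i
    have h1 : ∀ j : Fin 3, E t x j = (crossProduct (curl3 (u t) x) (u t x)) j
        + pd j (fun y => p t y + (1 / 2) * (u t y ⬝ᵥ u t y)) x := by
      intro j; rw [hE t x, hD t x]; simp [grad3]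
    fin_cases i
    · show E t x 0 = EJ u 0 (t, x)
      rw [h1 0, hgb 0 t x, hgexp 0,
        show (crossProduct (curl3 (u t) x) (u t x)) 0
          = curl3 (u t) x 1 * u t x 2 - curl3 (u t) x 2 * u t x 1 from rfl,
        hcurl t x 1, hcurl t x 2, hUq t x 2, hUq t x 1, homv1, homv2]
      show _ = -(dv et (UJ u 0) (t, x))
      linear_combination hA 0 (t, x)
    · show E t x 1 = EJ u 1 (t, x)
      rw [h1 1, hgb 1 t x, hgexp 1,
        show (crossProduct (curl3 (u t) x) (u t x)) 1
          = curl3 (u t) x 2 * u t x 0 - curl3 (u t) x 0 * u t x 2 from rfl,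
        hcurl t x 2, hcurl t x 0, hUq t x 0, hUq t x 2, homv2, homv0]
      show _ = -(dv et (UJ u 1) (t, x))
      linear_combination hA 1 (t, x)
    · show E t x 2 = EJ u 2 (t, x)
      rw [h1 2, hgb 2 t x, hgexp 2,
        show (crossProduct (curl3 (u t) x) (u t x)) 2
          = curl3 (u t) x 0 * u t x 1 - curl3 (u t) x 1 * u t x 0 from rfl,
        hcurl t x 0, hcurl t x 1, hUq t x 1, hUq t x 0, homv0, homv1]
      show _ = -(dv et (UJ u 2) (t, x))
      linear_combination hA 2 (t, x)
  -- the vorticity equation at the joint level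
  have hvort : ∀ (i : Fin 3) (q : Q), dv et (omJ u i) q = -(XJ u i q) := by
    intro i q
    fin_cases i
    · show dv et (omJ u 0) q = -(XJ u 0 q)
      rw [homd0 et q, dv_comm (hUs 2) et (ex 1) q, dv_comm (hUs 1) et (ex 2) q,
        hAfun 2, hAfun 1,
        dv_euler_shape (hUs 0) (dv_smooth (hUs 2) (ex 0)) (hUs 1) (dv_smooth (hUs 2) (ex 1))
          (hUs 2) (dv_smooth (hUs 2) (ex 2)) (dv_smooth hP (ex 2)) (ex 1) q,
        dv_euler_shape (hUs 0) (dv_smooth (hUs 1) (ex 0)) (hUs 1) (dv_smooth (hUs 1) (ex 1))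
          (hUs 2) (dv_smooth (hUs 1) (ex 2)) (dv_smooth hP (ex 1)) (ex 2) q]
      simp only [XJ, homv0, homv1, homv2, homd0, homd1, homd2]
      linear_combination ((-1 : ℝ) * (UJ u 0 q)) * (dv_comm (hUs 2) (ex 1) (ex 0) q)
        + ((UJ u 0 q)) * (dv_comm (hUs 1) (ex 2) (ex 0) q)
        + ((UJ u 1 q)) * (dv_comm (hUs 1) (ex 2) (ex 1) q)
        + (dv_comm hP (ex 2) (ex 1) q)
        + ((UJ u 2 q)) * (dv_comm (hUs 2) (ex 2) (ex 1) q)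
        + (-(dv (ex 1) (UJ u 2) q - dv (ex 2) (UJ u 1) q)) * (hdivJ q)
    · show dv et (omJ u 1) q = -(XJ u 1 q)
      rw [homd1 et q, dv_comm (hUs 0) et (ex 2) q, dv_comm (hUs 2) et (ex 0) q,
        hAfun 0, hAfun 2,
        dv_euler_shape (hUs 0) (dv_smooth (hUs 0) (ex 0)) (hUs 1) (dv_smooth (hUs 0) (ex 1))
          (hUs 2) (dv_smooth (hUs 0) (ex 2)) (dv_smooth hP (ex 0)) (ex 2) q,
        dv_euler_shape (hUs 0) (dv_smooth (hUs 2) (ex 0)) (hUs 1) (dv_smooth (hUs 2) (ex 1))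
          (hUs 2) (dv_smooth (hUs 2) (ex 2)) (dv_smooth hP (ex 2)) (ex 0) q]
      simp only [XJ, homv0, homv1, homv2, homd0, homd1, homd2]
      linear_combination ((-1 : ℝ) * (UJ u 0 q)) * (dv_comm (hUs 0) (ex 2) (ex 0) q)
        + ((-1 : ℝ) * (UJ u 1 q)) * (dv_comm (hUs 0) (ex 2) (ex 1) q)
        + ((-1 : ℝ)) * (dv_comm hP (ex 2) (ex 0) q)
        + ((-1 : ℝ) * (UJ u 1 q)) * (dv_comm (hUs 2) (ex 1) (ex 0) q)
        + ((-1 : ℝ) * (UJ u 2 q)) * (dv_comm (hUs 2) (ex 2) (ex 0) q)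
        + (-(dv (ex 2) (UJ u 0) q - dv (ex 0) (UJ u 2) q)) * (hdivJ q)
    · show dv et (omJ u 2) q = -(XJ u 2 q)
      rw [homd2 et q, dv_comm (hUs 1) et (ex 0) q, dv_comm (hUs 0) et (ex 1) q,
        hAfun 1, hAfun 0,
        dv_euler_shape (hUs 0) (dv_smooth (hUs 1) (ex 0)) (hUs 1) (dv_smooth (hUs 1) (ex 1))
          (hUs 2) (dv_smooth (hUs 1) (ex 2)) (dv_smooth hP (ex 1)) (ex 0) q,
        dv_euler_shape (hUs 0) (dv_smooth (hUs 0) (ex 0)) (hUs 1) (dv_smooth (hUs 0) (ex 1))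
          (hUs 2) (dv_smooth (hUs 0) (ex 2)) (dv_smooth hP (ex 0)) (ex 1) q]
      simp only [XJ, homv0, homv1, homv2, homd0, homd1, homd2]
      linear_combination ((UJ u 0 q)) * (dv_comm (hUs 0) (ex 1) (ex 0) q)
        + (dv_comm hP (ex 1) (ex 0) q)
        + ((UJ u 1 q)) * (dv_comm (hUs 1) (ex 1) (ex 0) q)
        + ((UJ u 2 q)) * (dv_comm (hUs 1) (ex 2) (ex 0) q)
        + ((-1 : ℝ) * (UJ u 2 q)) * (dv_comm (hUs 0) (ex 2) (ex 1) q)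
        + (-(dv (ex 0) (UJ u 1) q - dv (ex 1) (UJ u 0) q)) * (hdivJ q)
  have hvf : ∀ j : Fin 3, dv et (omJ u j) = fun q => -(XJ u j q) := fun j => funext (hvort j)
  have hEfun : ∀ i : Fin 3, EJ u i = fun q => -(dv et (UJ u i) q) := fun i => rfl
  -- W = [u, ω] at the joint level
  have hWX : ∀ (t : ℝ) (x : V3) (i : Fin 3), W t x i = XJ u i (t, x) := by
    intro t x i
    have h := congrFun (hW t x) i
    rw [h]
    fin_cases i
    · show curl3 (E t) x 0 = XJ u 0 (t, x)
      rw [show curl3 (E t) x 0 = pd 1 (fun y => E t y 2) x - pd 2 (fun y => E t y 1) x from rfl]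
      simp only [hEeq]
      rw [bjE 1 2 t x, bjE 2 1 t x]
      rw [hEfun 2, hEfun 1]
      rw [dv_neg (A := dv et (UJ u 2)) (ex 1) (t, x), dv_neg (A := dv et (UJ u 1)) (ex 2) (t, x),
        dv_comm (hUs 2) (ex 1) et (t, x), dv_comm (hUs 1) (ex 2) et (t, x)]
      have h0 := hvort 0 (t, x)
      rw [homd0 et (t, x)] at h0
      linarith
    · show curl3 (E t) x 1 = XJ u 1 (t, x)
      rw [show curl3 (E t) x 1 = pd 2 (fun y => E t y 0) x - pd 0 (fun y => E t y 2) x from rfl]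
      simp only [hEeq]
      rw [bjE 2 0 t x, bjE 0 2 t x]
      rw [hEfun 0, hEfun 2]
      rw [dv_neg (A := dv et (UJ u 0)) (ex 2) (t, x), dv_neg (A := dv et (UJ u 2)) (ex 0) (t, x),
        dv_comm (hUs 0) (ex 2) et (t, x), dv_comm (hUs 2) (ex 0) et (t, x)]
      have h0 := hvort 1 (t, x)
      rw [homd1 et (t, x)] at h0
      linarith
    · show curl3 (E t) x 2 = XJ u 2 (t, x)
      rw [show curl3 (E t) x 2 = pd 0 (fun y => E t y 1) x - pd 1 (fun y => E t y 0) x from rfl]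
      simp only [hEeq]
      rw [bjE 0 1 t x, bjE 1 0 t x]
      rw [hEfun 1, hEfun 0]
      rw [dv_neg (A := dv et (UJ u 1)) (ex 0) (t, x), dv_neg (A := dv et (UJ u 0)) (ex 1) (t, x),
        dv_comm (hUs 1) (ex 0) et (t, x), dv_comm (hUs 0) (ex 1) et (t, x)]
      have h0 := hvort 2 (t, x)
      rw [homd2 et (t, x)] at h0
      linarith
  -- Leibniz expansion of derivatives of XJ
  have hXder : ∀ (i : Fin 3) (v q : Q), dv v (XJ u i) q
      = (UJ u 0 q * dv v (dv (ex 0) (omJ u i)) q + dv (ex 0) (omJ u i) q * dv v (UJ u 0) q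
        + UJ u 1 q * dv v (dv (ex 1) (omJ u i)) q + dv (ex 1) (omJ u i) q * dv v (UJ u 1) q
        + UJ u 2 q * dv v (dv (ex 2) (omJ u i)) q + dv (ex 2) (omJ u i) q * dv v (UJ u 2) q)
      - (omJ u 0 q * dv v (dv (ex 0) (UJ u i)) q + dv (ex 0) (UJ u i) q * dv v (omJ u 0) q
        + omJ u 1 q * dv v (dv (ex 1) (UJ u i)) q + dv (ex 1) (UJ u i) q * dv v (omJ u 1) q
        + omJ u 2 q * dv v (dv (ex 2) (UJ u i)) q + dv (ex 2) (UJ u i) q * dv v (omJ u 2) q) := by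
    intro i v q
    rw [show XJ u i = fun q => (UJ u 0 q * dv (ex 0) (omJ u i) q + UJ u 1 q * dv (ex 1) (omJ u i) q
          + UJ u 2 q * dv (ex 2) (omJ u i) q)
        - (omJ u 0 q * dv (ex 0) (UJ u i) q + omJ u 1 q * dv (ex 1) (UJ u i) q
          + omJ u 2 q * dv (ex 2) (UJ u i) q) from rfl,
      dv_X_shape (hUs 0) (dv_smooth (homs i) (ex 0)) (hUs 1) (dv_smooth (homs i) (ex 1))
        (hUs 2) (dv_smooth (homs i) (ex 2)) (homs 0) (dv_smooth (hUs i) (ex 0))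
        (homs 1) (dv_smooth (hUs i) (ex 1)) (homs 2) (dv_smooth (hUs i) (ex 2)) v q]
  -- final assembly
  intro t x
  funext i
  simp only [dtv, vbracket, adv, Pi.add_apply, Pi.sub_apply, Fin.sum_univ_three]
  simp only [hWX, hEeq, hcurl, hUq]
  simp only [bjX, bXt, bjE, bjom, bju]
  rw [hXder i et (t, x),
    dv_comm (homs i) et (ex 0) (t, x), dv_comm (homs i) et (ex 1) (t, x),
    dv_comm (homs i) et (ex 2) (t, x),
    dv_comm (hUs i) et (ex 0) (t, x), dv_comm (hUs i) et (ex 1) (t, x),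
    dv_comm (hUs i) et (ex 2) (t, x)]
  simp only [hvf, hEfun, dv_neg]
  ring
end
end

section
/- Let u, p be smooth fields on ℝ × ℝ³ solving the incompressible Euler equations: div u = 0 and ∂ₜu + (u·∇)u = −∇p, and set ω = curl u and λ = ω·u. Then λ satisfies the conservation law ∂ₜλ + div( λ u + ω (p − ½|u|²) ) = 0 at every point; consequently, for any smooth vector field U_λ satisfying λ (U_λ − u) = ω (p − ½|u|²) at every point, λ satisfies the continuity equation ∂ₜλ + div(λ U_λ) = 0. -/
open scoped BigOperators
open Matrix

noncomputable section

namespace hel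

lemma smooth_dapply {F : ℝ × V3 → ℝ} (hF : ContDiff ℝ (⊤ : ℕ∞) F) (w : ℝ × V3) :
    ContDiff ℝ (⊤ : ℕ∞) (fun q => fderiv ℝ F q w) :=
  (ContinuousLinearMap.apply ℝ ℝ w).contDiff.comp (hF.fderiv_right (by simp))

lemma fderiv_swap {F : ℝ × V3 → ℝ} (hF : ContDiff ℝ (⊤ : ℕ∞) F) (q v w : ℝ × V3) :
    fderiv ℝ (fun r => fderiv ℝ F r w) q v = fderiv ℝ (fun r => fderiv ℝ F r v) q w := by
  have hd : DifferentiableAt ℝ (fderiv ℝ F) q :=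
    ((hF.fderiv_right (m := (⊤ : ℕ∞)) (by simp)).differentiable (by simp)) q
  have h1 : ∀ w : ℝ × V3, fderiv ℝ (fun r => fderiv ℝ F r w) q
      = (fderiv ℝ (fderiv ℝ F) q).flip w := by
    intro w
    have := fderiv_clm_apply (c := fderiv ℝ F) (u := fun _ => w) hd (differentiableAt_const w)
    simpa using this
  rw [h1, h1]
  exact (hF.contDiffAt.isSymmSndFDerivAt (by rw [minSmoothness_of_isRCLikeNormedField]; exact WithTop.coe_le_coe.mpr le_top)).eq v w

lemma pd_rep {F : ℝ × V3 → ℝ} (hF : ContDiff ℝ (⊤ : ℕ∞) F) (i : Fin 3) (t : ℝ) (x : V3) :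
    pd i (fun y => F (t, y)) x = fderiv ℝ F (t, x) (0, Pi.single i 1) := by
  have h : HasFDerivAt (fun y : V3 => F (t, y))
      ((fderiv ℝ F (t, x)).comp (ContinuousLinearMap.inr ℝ ℝ V3)) x :=
    ((hF.differentiable (by simp)) (t, x)).hasFDerivAt.comp x (hasFDerivAt_prodMk_right t x)
  rw [pd, h.fderiv]; rfl

lemma deriv_rep {F : ℝ × V3 → ℝ} (hF : ContDiff ℝ (⊤ : ℕ∞) F) (t : ℝ) (x : V3) :
    deriv (fun s => F (s, x)) t = fderiv ℝ F (t, x) (1, 0) := by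
  have h : HasFDerivAt (fun s : ℝ => F (s, x))
      ((fderiv ℝ F (t, x)).comp (ContinuousLinearMap.inl ℝ ℝ V3)) t :=
    ((hF.differentiable (by simp)) (t, x)).hasFDerivAt.comp t (hasFDerivAt_prodMk_left t x)
  rw [h.hasDerivAt.deriv]; rfl

lemma pd_congr {f g : V3 → ℝ} (h : ∀ y, f y = g y) (i : Fin 3) (x : V3) :
    pd i f x = pd i g x := by rw [funext h]

section scalarfield
variable {f : ℝ → V3 → ℝ} (hf : SmoothS f)
include hf

lemma diffAt_space (t : ℝ) (x : V3) : DifferentiableAt ℝ (f t) x := by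
  have : (f t) = (fun y => (fun q : ℝ × V3 => f q.1 q.2) (t, y)) := rfl
  rw [this]
  exact ((hf.differentiable (by simp)) (t, x)).comp x (hasFDerivAt_prodMk_right t x).differentiableAt

lemma diffAt_time (t : ℝ) (x : V3) : DifferentiableAt ℝ (fun s => f s x) t :=
  by
  have : (fun s => f s x) = (fun s => (fun q : ℝ × V3 => f q.1 q.2) (s, x)) := rfl
  rw [this]
  exact ((hf.differentiable (by simp)) (t, x)).comp t (hasFDerivAt_prodMk_left (𝕜 := ℝ) (F := V3) t x).differentiableAt

lemma pd_smooth (j : Fin 3) : SmoothS (fun t x => pd j (f t) x) := by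
  show ContDiff ℝ (⊤ : ℕ∞) (fun q : ℝ × V3 => pd j (f q.1) q.2)
  have : (fun q : ℝ × V3 => pd j (f q.1) q.2)
      = (fun q : ℝ × V3 => fderiv ℝ (fun r : ℝ × V3 => f r.1 r.2) q (0, Pi.single j 1)) := by
    funext q
    exact pd_rep hf j q.1 q.2
  rw [this]
  exact smooth_dapply hf _

lemma pd_pd_comm (i j : Fin 3) (t : ℝ) (x : V3) :
    pd i (fun y => pd j (f t) y) x = pd j (fun y => pd i (f t) y) x := by
  have hrep : ∀ (k : Fin 3) (y : V3),
      pd k (f t) y = fderiv ℝ (fun q : ℝ × V3 => f q.1 q.2) (t, y) (0, Pi.single k 1) :=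
    fun k y => pd_rep hf k t y
  calc pd i (fun y => pd j (f t) y) x
      = pd i (fun y => (fun q : ℝ × V3 => fderiv ℝ (fun r : ℝ × V3 => f r.1 r.2) q
          (0, Pi.single j 1)) (t, y)) x := pd_congr (fun y => by rw [hrep j y]) i x
    _ = fderiv ℝ (fun q : ℝ × V3 => fderiv ℝ (fun r : ℝ × V3 => f r.1 r.2) q
          (0, Pi.single j 1)) (t, x) (0, Pi.single i 1) := pd_rep (smooth_dapply hf _) i t x
    _ = fderiv ℝ (fun q : ℝ × V3 => fderiv ℝ (fun r : ℝ × V3 => f r.1 r.2) q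
          (0, Pi.single i 1)) (t, x) (0, Pi.single j 1) := fderiv_swap hf _ _ _
    _ = pd j (fun y => (fun q : ℝ × V3 => fderiv ℝ (fun r : ℝ × V3 => f r.1 r.2) q
          (0, Pi.single i 1)) (t, y)) x := (pd_rep (smooth_dapply hf _) j t x).symm
    _ = pd j (fun y => pd i (f t) y) x := pd_congr (fun y => by rw [hrep i y]) j x

lemma deriv_pd_comm (j : Fin 3) (t : ℝ) (x : V3) :
    deriv (fun s => pd j (f s) x) t = pd j (fun y => deriv (fun s => f s y) t) x := by
  calc deriv (fun s => pd j (f s) x) t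
      = deriv (fun s => (fun q : ℝ × V3 => fderiv ℝ (fun r : ℝ × V3 => f r.1 r.2) q
          (0, Pi.single j 1)) (s, x)) t := by
        congr 1; funext s; exact pd_rep hf j s x
    _ = fderiv ℝ (fun q : ℝ × V3 => fderiv ℝ (fun r : ℝ × V3 => f r.1 r.2) q
          (0, Pi.single j 1)) (t, x) ((1 : ℝ), (0 : V3)) := deriv_rep (smooth_dapply hf _) t x
    _ = fderiv ℝ (fun q : ℝ × V3 => fderiv ℝ (fun r : ℝ × V3 => f r.1 r.2) q
          ((1 : ℝ), (0 : V3))) (t, x) (0, Pi.single j 1) := fderiv_swap hf _ _ _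
    _ = pd j (fun y => (fun q : ℝ × V3 => fderiv ℝ (fun r : ℝ × V3 => f r.1 r.2) q
          ((1 : ℝ), (0 : V3))) (t, y)) x := (pd_rep (smooth_dapply hf _) j t x).symm
    _ = pd j (fun y => deriv (fun s => f s y) t) x :=
        pd_congr (fun y => ((deriv_rep hf t y).symm : _)) j x

end scalarfield

lemma pd_def (i : Fin 3) (f : V3 → ℝ) (x : V3) : pd i f x = fderiv ℝ f x (Pi.single i 1) := rfl

lemma div3_eq (w : V3 → V3) (x : V3) :
    div3 w x = pd 0 (fun y => w y 0) x + pd 1 (fun y => w y 1) x + pd 2 (fun y => w y 2) x := by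
  simp [div3, Fin.sum_univ_three]

end hel

/-- conservation law and continuity equation for the helicity density. -/
theorem stmt16
    (u : ℝ → V3 → V3) (p : ℝ → V3 → ℝ)
    (hu : SmoothV u) (hp : SmoothS p)
    (hdiv : ∀ t x, div3 (u t) x = 0)
    (heuler : ∀ t x, dtv u t x + adv (u t x) (u t) x = -grad3 (p t) x)
    (lam : ℝ → V3 → ℝ)
    (hlam : ∀ t x, lam t x = curl3 (u t) x ⬝ᵥ u t x) :
    (∀ t x, dts lam t x
      + div3 (fun y => lam t y • u t y
          + (p t y - (1 / 2) * (u t y ⬝ᵥ u t y)) • curl3 (u t) y) x = 0) ∧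
    (∀ U : ℝ → V3 → V3, SmoothV U →
      (∀ t x, lam t x • (U t x - u t x)
        = (p t x - (1 / 2) * (u t x ⬝ᵥ u t x)) • curl3 (u t) x) →
      ∀ t x, dts lam t x + div3 (fun y => lam t y • U t y) x = 0) := by
  have hup : ∀ k : Fin 3, SmoothS (fun s y => u s y k) := fun k => contDiff_pi.mp hu k
  have main : ∀ (t : ℝ) (x : V3), dts lam t x
      + div3 (fun y => lam t y • u t y
          + (p t y - (1 / 2) * (u t y ⬝ᵥ u t y)) • curl3 (u t) y) x = 0 := by
    intro t x
    have du : ∀ k : Fin 3, DifferentiableAt ℝ (fun y => u t y k) x :=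
      fun k => hel.diffAt_space (hup k) t x
    have ddu : ∀ j k : Fin 3, DifferentiableAt ℝ (fun y => pd j (fun z => u t z k) y) x :=
      fun j k => hel.diffAt_space (hel.pd_smooth (hup k) j) t x
    have dp : DifferentiableAt ℝ (p t) x := hel.diffAt_space hp t x
    have ddp : ∀ j : Fin 3, DifferentiableAt ℝ (fun y => pd j (p t) y) x :=
      fun j => hel.diffAt_space (hel.pd_smooth hp j) t x
    have hT : ∀ (k : Fin 3) (y : V3), deriv (fun s => u s y k) t
        = -(u t y 0 * pd 0 (fun z => u t z k) y + (u t y 1 * pd 1 (fun z => u t z k) y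
            + u t y 2 * pd 2 (fun z => u t z k) y)) - pd k (p t) y := by
      intro k y
      have h := congrFun (heuler t y) k
      simp only [Pi.add_apply, Pi.neg_apply, dtv, adv, grad3, Fin.sum_univ_three] at h
      linarith
    have hTDe : ∀ i k : Fin 3, pd i (fun y => deriv (fun s => u s y k) t) x
        = -(pd i (fun y => u t y 0) x * pd 0 (fun z => u t z k) x + u t x 0 * pd i (fun y => pd 0 (fun z => u t z k) y) x + (pd i (fun y => u t y 1) x * pd 1 (fun z => u t z k) x + u t x 1 * pd i (fun y => pd 1 (fun z => u t z k) y) x + (pd i (fun y => u t y 2) x * pd 2 (fun z => u t z k) x + u t x 2 * pd i (fun y => pd 2 (fun z => u t z k) y) x))) - pd i (fun y => pd k (p t) y) x := by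
      intro i k
      have e : (fun y : V3 => deriv (fun s => u s y k) t) = (fun y : V3 =>
          -(u t y 0 * pd 0 (fun z => u t z k) y + (u t y 1 * pd 1 (fun z => u t z k) y
            + u t y 2 * pd 2 (fun z => u t z k) y)) - pd k (p t) y) := funext (hT k)
      rw [e]
      have H := ((((du 0).hasFDerivAt.mul (ddu 0 k).hasFDerivAt).add
        (((du 1).hasFDerivAt.mul (ddu 1 k).hasFDerivAt).add
         ((du 2).hasFDerivAt.mul (ddu 2 k).hasFDerivAt))).neg).sub (ddp k).hasFDerivAt
      rw [hel.pd_def]; erw [H.fderiv]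
      simp only [ContinuousLinearMap.add_apply, ContinuousLinearMap.sub_apply, ContinuousLinearMap.neg_apply, ContinuousLinearMap.smul_apply, smul_eq_mul, Pi.add_apply, Pi.sub_apply, Pi.mul_apply, Pi.neg_apply, ← hel.pd_def]
      ring
    have hswu : ∀ (m i j : Fin 3), pd i (fun y => pd j (fun z => u t z m) y) x
        = pd j (fun y => pd i (fun z => u t z m) y) x :=
      fun m i j => hel.pd_pd_comm (hup m) i j t x
    have hswp : ∀ i j : Fin 3, pd i (fun y => pd j (p t) y) x
        = pd j (fun y => pd i (p t) y) x := fun i j => hel.pd_pd_comm hp i j t x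
    have Hu : ∀ k : Fin 3, HasDerivAt (fun s => u s x k) (deriv (fun s => u s x k) t) t :=
      fun k => (hel.diffAt_time (hup k) t x).hasDerivAt
    have HDu : ∀ i k : Fin 3, HasDerivAt (fun s => pd i (fun y => u s y k) x)
        (pd i (fun y => deriv (fun s => u s y k) t) x) t := by
      intro i k
      have h : DifferentiableAt ℝ (fun s => pd i (fun y => u s y k) x) t :=
        hel.diffAt_time (hel.pd_smooth (hup k) i) t x
      have h2 := h.hasDerivAt
      have h3 : deriv (fun s => pd i (fun y => u s y k) x) t
          = pd i (fun y => deriv (fun s => u s y k) t) x := hel.deriv_pd_comm (hup k) i t x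
      rwa [h3] at h2
    have HA : HasDerivAt (fun s =>
        (pd 1 (fun y => u s y 2) x - pd 2 (fun y => u s y 1) x) * u s x 0
        + ((pd 2 (fun y => u s y 0) x - pd 0 (fun y => u s y 2) x) * u s x 1
          + (pd 0 (fun y => u s y 1) x - pd 1 (fun y => u s y 0) x) * u s x 2))
        (((pd 1 (fun y => deriv (fun s => u s y 2) t) x - pd 2 (fun y => deriv (fun s => u s y 1) t) x) * u t x 0 + (pd 1 (fun y => u t y 2) x - pd 2 (fun y => u t y 1) x) * deriv (fun s => u s x 0) t) + (((pd 2 (fun y => deriv (fun s => u s y 0) t) x - pd 0 (fun y => deriv (fun s => u s y 2) t) x) * u t x 1 + (pd 2 (fun y => u t y 0) x - pd 0 (fun y => u t y 2) x) * deriv (fun s => u s x 1) t) + ((pd 0 (fun y => deriv (fun s => u s y 1) t) x - pd 1 (fun y => deriv (fun s => u s y 0) t) x) * u t x 2 + (pd 0 (fun y => u t y 1) x - pd 1 (fun y => u t y 0) x) * deriv (fun s => u s x 2) t))) t :=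
      (((HDu 1 2).sub (HDu 2 1)).mul (Hu 0)).add
        ((((HDu 2 0).sub (HDu 0 2)).mul (Hu 1)).add (((HDu 0 1).sub (HDu 1 0)).mul (Hu 2)))
    have elam : (fun s => lam s x) = (fun s =>
        (pd 1 (fun y => u s y 2) x - pd 2 (fun y => u s y 1) x) * u s x 0
        + ((pd 2 (fun y => u s y 0) x - pd 0 (fun y => u s y 2) x) * u s x 1
          + (pd 0 (fun y => u s y 1) x - pd 1 (fun y => u s y 0) x) * u s x 2)) := by
      funext s
      rw [hlam]
      simp [curl3, dotProduct, Fin.sum_univ_three, Matrix.cons_val_zero, Matrix.cons_val_one,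
        Matrix.head_cons]
      try ring
    have hA : dts lam t x = ((pd 1 (fun y => deriv (fun s => u s y 2) t) x - pd 2 (fun y => deriv (fun s => u s y 1) t) x) * u t x 0 + (pd 1 (fun y => u t y 2) x - pd 2 (fun y => u t y 1) x) * deriv (fun s => u s x 0) t) + (((pd 2 (fun y => deriv (fun s => u s y 0) t) x - pd 0 (fun y => deriv (fun s => u s y 2) t) x) * u t x 1 + (pd 2 (fun y => u t y 0) x - pd 0 (fun y => u t y 2) x) * deriv (fun s => u s x 1) t) + ((pd 0 (fun y => deriv (fun s => u s y 1) t) x - pd 1 (fun y => deriv (fun s => u s y 0) t) x) * u t x 2 + (pd 0 (fun y => u t y 1) x - pd 1 (fun y => u t y 0) x) * deriv (fun s => u s x 2) t)) := by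
      show deriv (fun s => lam s x) t = _
      rw [elam]
      exact HA.deriv
    have HAsp := (((ddu 1 2).hasFDerivAt.sub (ddu 2 1).hasFDerivAt).mul (du 0).hasFDerivAt).add
      ((((ddu 2 0).hasFDerivAt.sub (ddu 0 2).hasFDerivAt).mul (du 1).hasFDerivAt).add
       (((ddu 0 1).hasFDerivAt.sub (ddu 1 0).hasFDerivAt).mul (du 2).hasFDerivAt))
    have HB := dp.hasFDerivAt.sub ((((du 0).hasFDerivAt.mul (du 0).hasFDerivAt).add
      (((du 1).hasFDerivAt.mul (du 1).hasFDerivAt).add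
       ((du 2).hasFDerivAt.mul (du 2).hasFDerivAt))).const_mul (1 / 2 : ℝ))
    have e0 : (fun y : V3 => (lam t y • u t y + (p t y - (1 / 2) * (u t y ⬝ᵥ u t y)) • curl3 (u t) y) 0) = (fun y : V3 => ((pd 1 (fun z => u t z 2) y - pd 2 (fun z => u t z 1) y) * u t y 0 + ((pd 2 (fun z => u t z 0) y - pd 0 (fun z => u t z 2) y) * u t y 1 + (pd 0 (fun z => u t z 1) y - pd 1 (fun z => u t z 0) y) * u t y 2)) * u t y 0 + (p t y - 1 / 2 * (u t y 0 * u t y 0 + (u t y 1 * u t y 1 + u t y 2 * u t y 2))) * (pd 1 (fun z => u t z 2) y - pd 2 (fun z => u t z 1) y)) := by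
      funext y
      rw [hlam]
      simp [curl3, dotProduct, Fin.sum_univ_three, Pi.add_apply, Pi.smul_apply, smul_eq_mul,
        Matrix.cons_val_zero, Matrix.cons_val_one, Matrix.head_cons]
      try ring
    have hb0 : pd 0 (fun y : V3 => ((pd 1 (fun z => u t z 2) y - pd 2 (fun z => u t z 1) y) * u t y 0 + ((pd 2 (fun z => u t z 0) y - pd 0 (fun z => u t z 2) y) * u t y 1 + (pd 0 (fun z => u t z 1) y - pd 1 (fun z => u t z 0) y) * u t y 2)) * u t y 0 + (p t y - 1 / 2 * (u t y 0 * u t y 0 + (u t y 1 * u t y 1 + u t y 2 * u t y 2))) * (pd 1 (fun z => u t z 2) y - pd 2 (fun z => u t z 1) y)) x = (pd 0 (fun y => u t y 0) x) * (pd 0 (fun y => u t y 1) x) * (u t x 2) + (-1 : ℝ) * (pd 0 (fun y => u t y 0) x) * (pd 0 (fun y => u t y 2) x) * (u t x 1) + (-1 : ℝ) * (pd 0 (fun y => u t y 0) x) * (pd 1 (fun y => u t y 0) x) * (u t x 2) + (pd 0 (fun y => u t y 0) x) * (pd 1 (fun y => u t y 2) x) * (u t x 0) + (pd 0 (fun y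 => u t y 0) x) * (pd 2 (fun y => u t y 0) x) * (u t x 1) + (-1 : ℝ) * (pd 0 (fun y => u t y 0) x) * (pd 2 (fun y => u t y 1) x) * (u t x 0) + (-1 : ℝ) * (pd 0 (fun y => u t y 1) x) * (pd 1 (fun y => u t y 2) x) * (u t x 1) + (pd 0 (fun y => u t y 1) x) * (pd 2 (fun y => u t y 0) x) * (u t x 0) + (pd 0 (fun y => u t y 1) x) * (pd 2 (fun y => u t y 1) x) * (u t x 1) + (-1 : ℝ) * (pd 0 (fun y => u t y 2) x) * (pd 1 (fun y => u t y 0) x) * (u t x 0) + (-1 : ℝ) * (pd 0 (fun y => u t y 2) x) * (pd 1 (fun y => u t y 2) x) * (u t x 2) + (pd 0 (fun y => u t y 2) x) * (pd 2 (fun y => u t y 1) x) * (u t x 2) + (pd 1 (fun y => u t y 2) x) * (pd 0 (p t) x) + (-1 : ℝ) * (pd 2 (fun y => u t y 1) x) * (pd 0 (p t) x) + (pd 0 (fun y => pd 0 (fun z => u t z 1) y) x) * (u t x 0) * (u t x 2) + (-1 : ℝ) * (pd 0 (fun y => pd 0 (fun z => u t z 2) y) x) * (u t x 0) * (u t x 1)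 + (-1 : ℝ) * (pd 0 (fun y => pd 1 (fun z => u t z 0) y) x) * (u t x 0) * (u t x 2) + (pd 0 (fun y => pd 1 (fun z => u t z 2) y) x) * (p t x) + (1 / 2 : ℝ) * (pd 0 (fun y => pd 1 (fun z => u t z 2) y) x) * (u t x 0) * (u t x 0) + (-1 / 2 : ℝ) * (pd 0 (fun y => pd 1 (fun z => u t z 2) y) x) * (u t x 1) * (u t x 1) + (-1 / 2 : ℝ) * (pd 0 (fun y => pd 1 (fun z => u t z 2) y) x) * (u t x 2) * (u t x 2) + (pd 0 (fun y => pd 2 (fun z => u t z 0) y) x) * (u t x 0) * (u t x 1) + (-1 : ℝ) * (pd 0 (fun y => pd 2 (fun z => u t z 1) y) x) * (p t x) + (-1 / 2 : ℝ) * (pd 0 (fun y => pd 2 (fun z => u t z 1) y) x) * (u t x 0) * (u t x 0) + (1 / 2 : ℝ) * (pd 0 (fun y => pd 2 (fun z => u t z 1) y) x) * (u t x 1) * (u t x 1) + (1 / 2 : ℝ) * (pd 0 (fun y => pd 2 (fun z => u t z 1) y) x) * (u t x 2) * (u t x 2) := by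
      have H := (HAsp.mul (du 0).hasFDerivAt).add (HB.mul ((ddu 1 2).hasFDerivAt.sub (ddu 2 1).hasFDerivAt))
      rw [hel.pd_def]; erw [H.fderiv]
      simp only [ContinuousLinearMap.add_apply, ContinuousLinearMap.sub_apply, ContinuousLinearMap.neg_apply, ContinuousLinearMap.smul_apply, smul_eq_mul, Pi.add_apply, Pi.sub_apply, Pi.mul_apply, Pi.neg_apply, ← hel.pd_def]
      ring
    have e1 : (fun y : V3 => (lam t y • u t y + (p t y - (1 / 2) * (u t y ⬝ᵥ u t y)) • curl3 (u t) y) 1) = (fun y : V3 => ((pd 1 (fun z => u t z 2) y - pd 2 (fun z => u t z 1) y) * u t y 0 + ((pd 2 (fun z => u t z 0) y - pd 0 (fun z => u t z 2) y) * u t y 1 + (pd 0 (fun z => u t z 1) y - pd 1 (fun z => u t z 0) y) * u t y 2)) * u t y 1 + (p t y - 1 / 2 * (u t y 0 * u t y 0 + (u t y 1 * u t y 1 + u t y 2 * u t y 2))) * (pd 2 (fun z => u t z 0) y - pd 0 (fun z => u t z 2) y)) := by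
      funext y
      rw [hlam]
      simp [curl3, dotProduct, Fin.sum_univ_three, Pi.add_apply, Pi.smul_apply, smul_eq_mul,
        Matrix.cons_val_zero, Matrix.cons_val_one, Matrix.head_cons]
      try ring
    have hb1 : pd 1 (fun y : V3 => ((pd 1 (fun z => u t z 2) y - pd 2 (fun z => u t z 1) y) * u t y 0 + ((pd 2 (fun z => u t z 0) y - pd 0 (fun z => u t z 2) y) * u t y 1 + (pd 0 (fun z => u t z 1) y - pd 1 (fun z => u t z 0) y) * u t y 2)) * u t y 1 + (p t y - 1 / 2 * (u t y 0 * u t y 0 + (u t y 1 * u t y 1 + u t y 2 * u t y 2))) * (pd 2 (fun z => u t z 0) y - pd 0 (fun z => u t z 2) y)) x = (pd 0 (fun y => u t y 1) x) * (pd 1 (fun y => u t y 1) x) * (u t x 2) + (pd 0 (fun y => u t y 1) x) * (pd 1 (fun y => u t y 2) x) * (u t x 1) + (pd 0 (fun y => u t y 2) x) * (pd 1 (fun y => u t y 0) x) * (u t x 0) + (-1 : ℝ) * (pd 0 (fun y => u t y 2) x) * (pd 1 (fun y => u t y 1) x) * (u t x 1) + (pd 0 (fun y => u t y 2) x) * (pd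 1 (fun y => u t y 2) x) * (u t x 2) + (-1 : ℝ) * (pd 0 (fun y => u t y 2) x) * (pd 1 (p t) x) + (-1 : ℝ) * (pd 1 (fun y => u t y 0) x) * (pd 1 (fun y => u t y 1) x) * (u t x 2) + (-1 : ℝ) * (pd 1 (fun y => u t y 0) x) * (pd 2 (fun y => u t y 0) x) * (u t x 0) + (-1 : ℝ) * (pd 1 (fun y => u t y 0) x) * (pd 2 (fun y => u t y 1) x) * (u t x 1) + (pd 1 (fun y => u t y 1) x) * (pd 1 (fun y => u t y 2) x) * (u t x 0) + (pd 1 (fun y => u t y 1) x) * (pd 2 (fun y => u t y 0) x) * (u t x 1) + (-1 : ℝ) * (pd 1 (fun y => u t y 1) x) * (pd 2 (fun y => u t y 1) x) * (u t x 0) + (-1 : ℝ) * (pd 1 (fun y => u t y 2) x) * (pd 2 (fun y => u t y 0) x) * (u t x 2) + (pd 2 (fun y => u t y 0) x) * (pd 1 (p t) x) + (pd 1 (fun y => pd 0 (fun z => u t z 1) y) x) * (u t x 1) * (u t x 2) + (-1 : ℝ) * (pd 1 (fun y => pd 0 (fun z => u t z 2) y) x) * (p t x) + (1 / 2 : ℝ)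 * (pd 1 (fun y => pd 0 (fun z => u t z 2) y) x) * (u t x 0) * (u t x 0) + (-1 / 2 : ℝ) * (pd 1 (fun y => pd 0 (fun z => u t z 2) y) x) * (u t x 1) * (u t x 1) + (1 / 2 : ℝ) * (pd 1 (fun y => pd 0 (fun z => u t z 2) y) x) * (u t x 2) * (u t x 2) + (-1 : ℝ) * (pd 1 (fun y => pd 1 (fun z => u t z 0) y) x) * (u t x 1) * (u t x 2) + (pd 1 (fun y => pd 1 (fun z => u t z 2) y) x) * (u t x 0) * (u t x 1) + (pd 1 (fun y => pd 2 (fun z => u t z 0) y) x) * (p t x) + (-1 / 2 : ℝ) * (pd 1 (fun y => pd 2 (fun z => u t z 0) y) x) * (u t x 0) * (u t x 0) + (1 / 2 : ℝ) * (pd 1 (fun y => pd 2 (fun z => u t z 0) y) x) * (u t x 1) * (u t x 1) + (-1 / 2 : ℝ) * (pd 1 (fun y => pd 2 (fun z => u t z 0) y) x) * (u t x 2) * (u t x 2) + (-1 : ℝ) * (pd 1 (fun y => pd 2 (fun z => u t z 1) y) x) * (u t x 0) * (u t x 1) := by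
      have H := (HAsp.mul (du 1).hasFDerivAt).add (HB.mul ((ddu 2 0).hasFDerivAt.sub (ddu 0 2).hasFDerivAt))
      rw [hel.pd_def]; erw [H.fderiv]
      simp only [ContinuousLinearMap.add_apply, ContinuousLinearMap.sub_apply, ContinuousLinearMap.neg_apply, ContinuousLinearMap.smul_apply, smul_eq_mul, Pi.add_apply, Pi.sub_apply, Pi.mul_apply, Pi.neg_apply, ← hel.pd_def]
      ring
    have e2 : (fun y : V3 => (lam t y • u t y + (p t y - (1 / 2) * (u t y ⬝ᵥ u t y)) • curl3 (u t) y) 2) = (fun y : V3 => ((pd 1 (fun z => u t z 2) y - pd 2 (fun z => u t z 1) y) * u t y 0 + ((pd 2 (fun z => u t z 0) y - pd 0 (fun z => u t z 2) y) * u t y 1 + (pd 0 (fun z => u t z 1) y - pd 1 (fun z => u t z 0) y) * u t y 2)) * u t y 2 + (p t y - 1 / 2 * (u t y 0 * u t y 0 + (u t y 1 * u t y 1 + u t y 2 * u t y 2))) * (pd 0 (fun z => u t z 1) y - pd 1 (fun z => u t z 0) y)) := by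
      funext y
      rw [hlam]
      simp [curl3, dotProduct, Fin.sum_univ_three, Pi.add_apply, Pi.smul_apply, smul_eq_mul,
        Matrix.cons_val_zero, Matrix.cons_val_one, Matrix.head_cons]
      try ring
    have hb2 : pd 2 (fun y : V3 => ((pd 1 (fun z => u t z 2) y - pd 2 (fun z => u t z 1) y) * u t y 0 + ((pd 2 (fun z => u t z 0) y - pd 0 (fun z => u t z 2) y) * u t y 1 + (pd 0 (fun z => u t z 1) y - pd 1 (fun z => u t z 0) y) * u t y 2)) * u t y 2 + (p t y - 1 / 2 * (u t y 0 * u t y 0 + (u t y 1 * u t y 1 + u t y 2 * u t y 2))) * (pd 0 (fun z => u t z 1) y - pd 1 (fun z => u t z 0) y)) x = (-1 : ℝ) * (pd 0 (fun y => u t y 1) x) * (pd 2 (fun y => u t y 0) x) * (u t x 0) + (-1 : ℝ) * (pd 0 (fun y => u t y 1) x) * (pd 2 (fun y => u t y 1) x) * (u t x 1) + (pd 0 (fun y => u t y 1) x) * (pd 2 (fun y => u t y 2) x) * (u t x 2) + (pd 0 (fun y => u t y 1) x) * (pd 2 (p t) x) + (-1 : ℝ) * (pd 0 (fun y => u t y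 2) x) * (pd 2 (fun y => u t y 1) x) * (u t x 2) + (-1 : ℝ) * (pd 0 (fun y => u t y 2) x) * (pd 2 (fun y => u t y 2) x) * (u t x 1) + (pd 1 (fun y => u t y 0) x) * (pd 2 (fun y => u t y 0) x) * (u t x 0) + (pd 1 (fun y => u t y 0) x) * (pd 2 (fun y => u t y 1) x) * (u t x 1) + (-1 : ℝ) * (pd 1 (fun y => u t y 0) x) * (pd 2 (fun y => u t y 2) x) * (u t x 2) + (-1 : ℝ) * (pd 1 (fun y => u t y 0) x) * (pd 2 (p t) x) + (pd 1 (fun y => u t y 2) x) * (pd 2 (fun y => u t y 0) x) * (u t x 2) + (pd 1 (fun y => u t y 2) x) * (pd 2 (fun y => u t y 2) x) * (u t x 0) + (pd 2 (fun y => u t y 0) x) * (pd 2 (fun y => u t y 2) x) * (u t x 1) + (-1 : ℝ) * (pd 2 (fun y => u t y 1) x) * (pd 2 (fun y => u t y 2) x) * (u t x 0) + (pd 2 (fun y => pd 0 (fun z => u t z 1) y) x) * (p t x) + (-1 / 2 : ℝ) * (pd 2 (fun y => pd 0 (fun z => u t z 1) y) x) * (u t x 0) * (u t x 0) + (-1 /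 2 : ℝ) * (pd 2 (fun y => pd 0 (fun z => u t z 1) y) x) * (u t x 1) * (u t x 1) + (1 / 2 : ℝ) * (pd 2 (fun y => pd 0 (fun z => u t z 1) y) x) * (u t x 2) * (u t x 2) + (-1 : ℝ) * (pd 2 (fun y => pd 0 (fun z => u t z 2) y) x) * (u t x 1) * (u t x 2) + (-1 : ℝ) * (pd 2 (fun y => pd 1 (fun z => u t z 0) y) x) * (p t x) + (1 / 2 : ℝ) * (pd 2 (fun y => pd 1 (fun z => u t z 0) y) x) * (u t x 0) * (u t x 0) + (1 / 2 : ℝ) * (pd 2 (fun y => pd 1 (fun z => u t z 0) y) x) * (u t x 1) * (u t x 1) + (-1 / 2 : ℝ) * (pd 2 (fun y => pd 1 (fun z => u t z 0) y) x) * (u t x 2) * (u t x 2) + (pd 2 (fun y => pd 1 (fun z => u t z 2) y) x) * (u t x 0) * (u t x 2) + (pd 2 (fun y => pd 2 (fun z => u t z 0) y) x) * (u t x 1) * (u t x 2) + (-1 : ℝ) * (pd 2 (fun y => pd 2 (fun z => u t z 1) y) x) * (u t x 0) * (u t x 2) := by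
      have H := (HAsp.mul (du 2).hasFDerivAt).add (HB.mul ((ddu 0 1).hasFDerivAt.sub (ddu 1 0).hasFDerivAt))
      rw [hel.pd_def]; erw [H.fderiv]
      simp only [ContinuousLinearMap.add_apply, ContinuousLinearMap.sub_apply, ContinuousLinearMap.neg_apply, ContinuousLinearMap.smul_apply, smul_eq_mul, Pi.add_apply, Pi.sub_apply, Pi.mul_apply, Pi.neg_apply, ← hel.pd_def]
      ring
    simp only [hel.div3_eq]
    rw [e0, e1, e2, hb0, hb1, hb2, hA]
    linear_combination ((pd 1 (fun y => u t y 2) x) + (-1 : ℝ) * (pd 2 (fun y => u t y 1) x)) * (hT 0 x) + ((-1 : ℝ) * (pd 0 (fun y => u t y 2) x) + (pd 2 (fun y => u t y 0) x)) * (hT 1 x) + ((pd 0 (fun y => u t y 1) x) + (-1 : ℝ) * (pd 1 (fun y => u t y 0) x)) * (hT 2 x) + ((u t x 2)) * (hTDe 0 1) + ((-1 : ℝ) * (u t x 1)) * (hTDe 0 2) + ((-1 : ℝ) * (u t x 2)) * (hTDe 1 0) + ((u t x 0)) * (hTDe 1 2) + ((u t x 1)) * (hTDe 2 0) + ((-1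 : ℝ) * (u t x 0)) * (hTDe 2 1) + ((-1 : ℝ) * (u t x 0) * (u t x 2)) * (hswu 0 0 1) + ((-1 : ℝ) * (u t x 1) * (u t x 2)) * (hswu 1 0 1) + ((p t x) + (1 / 2 : ℝ) * (u t x 0) * (u t x 0) + (1 / 2 : ℝ) * (u t x 1) * (u t x 1) + (-1 / 2 : ℝ) * (u t x 2) * (u t x 2)) * (hswu 2 0 1) + ((-1 : ℝ) * (u t x 2)) * (hswp 0 1) + ((u t x 0) * (u t x 1)) * (hswu 0 0 2) + ((-1 : ℝ) * (p t x) + (-1 / 2 : ℝ) * (u t x 0) * (u t x 0) + (1 / 2 : ℝ) * (u t x 1) * (u t x 1) + (-1 / 2 : ℝ) * (u t x 2) * (u t x 2)) * (hswu 1 0 2) + ((u t x 1) * (u t x 2)) * (hswu 2 0 2) + ((u t x 1)) * (hswp 0 2) + ((p t x) + (-1 / 2 : ℝ) * (u t x 0) * (u t x 0) + (1 / 2 : ℝ) * (u t x 1) * (u t x 1) + (1 / 2 : ℝ) * (u t x 2) * (u t x 2)) * (hswu 0 1 2) + ((-1 : ℝ) * (u t x 0) * (u t x 1)) * (hswu 1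 1 2) + ((-1 : ℝ) * (u t x 0) * (u t x 2)) * (hswu 2 1 2) + ((-1 : ℝ) * (u t x 0)) * (hswp 1 2)
  refine ⟨main, ?_⟩
  intro U hU hrel t x
  have hfun : (fun y => lam t y • U t y) = (fun y => lam t y • u t y
      + (p t y - (1 / 2) * (u t y ⬝ᵥ u t y)) • curl3 (u t) y) := by
    funext y
    have h := hrel t y
    rw [smul_sub] at h
    rw [← h]
    abel
  rw [hfun]
  exact main t x
end
end

section
/- (Circulation theorem for the Bernoulli vector.) Let u, p be smooth fields on ℝ × ℝ³ solving the incompressible Euler equations: div u = 0 and ∂ₜu + (u·∇)u = −∇p, set ω = curl u and E = ω × u + ∇(p + ½|u|²). Let φ : ℝ × ℝ³ → ℝ³ be a smooth flow map of u, i.e. ∂ₜφ(t,x) = u(t, φ(t,x)) for all (t,x), and let γ : [0,1] → ℝ³ be a smooth closed curve with γ(0) = γ(1) and γ'(0) = γ'(1). Then the circulation C(t) = ∫₀¹ E(t, φ(t,γ(s))) · ∂ₛφ(t,γ(s)) ds is differentiable in t with derivative C'(t) = ∫₀¹ (E × ω)(t, φ(t,γ(s))) · ∂ₛφ(t,γ(s))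 ds. -/
open scoped BigOperators
open Matrix

noncomputable section

open MeasureTheory


section Helpers

variable {E F : Type*} [NormedAddCommGroup E] [NormedSpace ℝ E]
  [NormedAddCommGroup F] [NormedSpace ℝ F]

/-- directional derivative -/
def DD (v : E) (f : E → ℝ) (q : E) : ℝ := fderiv ℝ f q v

theorem DD_smooth {f : E → ℝ} (hf : ContDiff ℝ (⊤ : ℕ∞) f) (v : E) :
    ContDiff ℝ (⊤ : ℕ∞) (DD v f) :=
  (hf.fderiv_right ((by simp))).clm_apply contDiff_const

theorem DD_comm {f : E → ℝ} (hf : ContDiff ℝ (⊤ : ℕ∞) f) (v w : E) (q : E) :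
    DD v (DD w f) q = DD w (DD v f) q := by
  have hsym : fderiv ℝ (fderiv ℝ f) q v w = fderiv ℝ (fderiv ℝ f) q w v := by
    have h2 : ContDiffAt ℝ 2 f q := hf.contDiffAt.of_le (WithTop.coe_le_coe.mpr (le_top : (2 : ℕ∞) ≤ ⊤))
    exact (h2.isSymmSndFDerivAt (by norm_num)).eq v w
  have key : ∀ a b : E, DD a (DD b f) q = fderiv ℝ (fderiv ℝ f) q a b := by
    intro a b
    have hdf : DifferentiableAt ℝ (fderiv ℝ f) q :=
      ((hf.fderiv_right (m := (⊤ : ℕ∞)) ((by simp))).differentiable (by simp)).differentiableAt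
    have h := fderiv_comp (𝕜 := ℝ) q ((ContinuousLinearMap.apply ℝ ℝ b).differentiableAt (x := fderiv ℝ f q)) hdf
    have : DD a (DD b f) q = fderiv ℝ ((ContinuousLinearMap.apply ℝ ℝ b) ∘ (fderiv ℝ f)) q a := rfl
    rw [this, h]; simp
  rw [key v w, key w v, hsym]

theorem DD_add {f g : E → ℝ} {q : E} (hf : DifferentiableAt ℝ f q) (hg : DifferentiableAt ℝ g q)
    (v : E) : DD v (fun x => f x + g x) q = DD v f q + DD v g q := by
  simp [DD, fderiv_fun_add hf hg]

theorem DD_mul {f g : E → ℝ} {q : E} (hf : DifferentiableAt ℝ f q) (hg : DifferentiableAt ℝ g q)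
    (v : E) : DD v (fun x => f x * g x) q = f q * DD v g q + g q * DD v f q := by
  simp [DD, fderiv_fun_mul hf hg]

theorem DD_neg {f : E → ℝ} {q : E} (v : E) : DD v (fun x => -f x) q = -DD v f q := by
  simp [DD]

theorem DD_sum {ι : Type*} (s : Finset ι) (f : ι → E → ℝ) {q : E}
    (hf : ∀ i ∈ s, DifferentiableAt ℝ (f i) q) (v : E) :
    DD v (fun x => ∑ i ∈ s, f i x) q = ∑ i ∈ s, DD v (f i) q := by
  simp only [DD]
  rw [fderiv_fun_sum hf]
  simp

theorem DD_chain {f : E → ℝ} {G : F → E} {q : F} (hf : DifferentiableAt ℝ f (G q))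
    (hG : DifferentiableAt ℝ G q) (v : F) :
    DD v (fun x => f (G x)) q = DD (fderiv ℝ G q v) f (G q) := by
  have : DD v (fun x => f (G x)) q = fderiv ℝ (f ∘ G) q v := rfl
  rw [this, fderiv_comp q hf hG]; rfl

theorem comp_fderiv_proj {G : E → V3} {q : E} (hG : DifferentiableAt ℝ G q) (i : Fin 3) (v : E) :
    fderiv ℝ (fun x => G x i) q v = fderiv ℝ G q v i := by
  have h := ((ContinuousLinearMap.proj (R := ℝ) (φ := fun _ : Fin 3 => ℝ) i).hasFDerivAt.comp q
    hG.hasFDerivAt).fderiv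
  have : (fun x => G x i) = (ContinuousLinearMap.proj (R := ℝ) (φ := fun _ : Fin 3 => ℝ) i) ∘ G := rfl
  rw [this, h]; rfl

def e0 : ℝ × V3 := (1, 0)
def ee (j : Fin 3) : ℝ × V3 := (0, Pi.single j 1)

section Coord
variable {β : Type*} [NormedAddCommGroup β] [NormedSpace ℝ β]

theorem hasDerivAt_fst' {f : ℝ × β → ℝ} {t : ℝ} {x : β} (hf : DifferentiableAt ℝ f (t, x)) :
    HasDerivAt (fun s => f (s, x)) (DD ((1:ℝ), (0:β)) f (t, x)) t :=
  hf.hasFDerivAt.comp_hasDerivAt t ((hasDerivAt_id t).prodMk (hasDerivAt_const t x))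

theorem hasDerivAt_snd' {f : ℝ × ℝ → ℝ} {t s : ℝ} (hf : DifferentiableAt ℝ f (t, s)) :
    HasDerivAt (fun s' => f (t, s')) (DD ((0:ℝ), (1:ℝ)) f (t, s)) s :=
  hf.hasFDerivAt.comp_hasDerivAt s ((hasDerivAt_const s t).prodMk (hasDerivAt_id s))

theorem fderiv_snd_eq_DD {f : ℝ × β → ℝ} {t : ℝ} {x : β} (hf : DifferentiableAt ℝ f (t, x)) (v : β) :
    fderiv ℝ (fun y => f (t, y)) x v = DD ((0:ℝ), v) f (t, x) := by
  have hin : HasFDerivAt (fun y : β => (t, y)) (ContinuousLinearMap.inr ℝ ℝ β) x :=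
    hasFDerivAt_prodMk_right t x
  have h := (hf.hasFDerivAt.comp x hin).fderiv
  have e : (fun y : β => f (t, y)) = f ∘ (fun y : β => (t, y)) := rfl
  rw [e, h]; rfl
end Coord

theorem DD_decomp {f : ℝ × V3 → ℝ} {q : ℝ × V3} (a : ℝ) (v : V3) :
    DD (a, v) f q = a * DD e0 f q + ∑ j, v j * DD (ee j) f q := by
  have hv : ((a, v) : ℝ × V3) = a • e0 + ∑ j, v j • ee j := by
    refine Prod.ext ?_ ?_ <;> simp [e0, ee, Prod.fst_sum, Prod.snd_sum]
    · funext k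
      simp [Finset.sum_apply, Pi.single_apply]
  rw [DD, hv]
  simp only [map_add, map_sum, _root_.map_smul]
  simp [DD, smul_eq_mul]

theorem pd_eq_DD {f : ℝ × V3 → ℝ} {t : ℝ} {x : V3} (hf : DifferentiableAt ℝ f (t, x)) (j : Fin 3) :
    pd j (fun y => f (t, y)) x = DD (ee j) f (t, x) :=
  fderiv_snd_eq_DD hf (Pi.single j 1)

theorem deriv_time_eq_DD {f : ℝ × V3 → ℝ} {t : ℝ} {x : V3} (hf : DifferentiableAt ℝ f (t, x)) :
    deriv (fun s => f (s, x)) t = DD e0 f (t, x) := (hasDerivAt_fst' hf).deriv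

end Helpers

section EulerSection
variable (u : ℝ → V3 → V3) (p : ℝ → V3 → ℝ)

def UU (u : ℝ → V3 → V3) (i : Fin 3) : ℝ × V3 → ℝ := fun q => u q.1 q.2 i
def PP (p : ℝ → V3 → ℝ) : ℝ × V3 → ℝ := fun q => p q.1 q.2
def AA (u : ℝ → V3 → V3) (i : Fin 3) : ℝ × V3 → ℝ := DD e0 (UU u i)
def BB (p : ℝ → V3 → ℝ) : ℝ × V3 → ℝ := DD e0 (PP p)

theorem UU_smooth (hu : SmoothV u) (i : Fin 3) : ContDiff ℝ (⊤ : ℕ∞) (UU u i) :=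
  contDiff_pi.mp hu i

theorem AA_smooth (hu : SmoothV u) (i : Fin 3) : ContDiff ℝ (⊤ : ℕ∞) (AA u i) :=
  DD_smooth (UU_smooth u hu i) e0

theorem BB_smooth (hp : SmoothS p) : ContDiff ℝ (⊤ : ℕ∞) (BB p) := DD_smooth hp e0

theorem eulerJ (hu : SmoothV u) (hp : SmoothS p)
    (heuler : ∀ t x, dtv u t x + adv (u t x) (u t) x = -grad3 (p t) x) :
    ∀ (q : ℝ × V3) (i : Fin 3),
      AA u i q + ∑ j, UU u j q * DD (ee j) (UU u i) q = -DD (ee i) (PP p) q := by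
  rintro ⟨t, x⟩ i
  have h := congrFun (heuler t x) i
  have hUd : ∀ k, DifferentiableAt ℝ (UU u k) (t, x) := fun k =>
    ((UU_smooth u hu k).differentiable (by simp)).differentiableAt
  have hPd : DifferentiableAt ℝ (PP p) (t, x) :=
    (hp.differentiable (by simp)).differentiableAt
  simp only [Pi.add_apply, Pi.neg_apply, dtv, adv, grad3] at h
  have h1 : deriv (fun s => u s x i) t = AA u i (t, x) :=
    deriv_time_eq_DD (hUd i)
  have h2 : ∀ j, pd j (fun y => u t y i) x = DD (ee j) (UU u i) (t, x) := fun j =>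
    pd_eq_DD (hUd i) j
  have h3 : pd i (p t) x = DD (ee i) (PP p) (t, x) := pd_eq_DD hPd i
  rw [h1, h3] at h
  rw [← h]
  congr 1
  exact Finset.sum_congr rfl fun j _ => by rw [h2 j]; rfl

theorem eulerJ_t (hu : SmoothV u) (hp : SmoothS p)
    (heuler : ∀ t x, dtv u t x + adv (u t x) (u t) x = -grad3 (p t) x) :
    ∀ (q : ℝ × V3) (i : Fin 3),
      DD e0 (AA u i) q
        + ∑ j, (UU u j q * DD (ee j) (AA u i) q + AA u j q * DD (ee j) (UU u i) q)
        = -DD (ee i) (BB p) q := by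
  intro q i
  have hL : (fun q => AA u i q + ∑ j, UU u j q * DD (ee j) (UU u i) q)
      = fun q => -DD (ee i) (PP p) q := funext fun q => eulerJ u p hu hp heuler q i
  have hstep := congrFun (congrArg (DD e0) hL) q
  have hAd : DifferentiableAt ℝ (AA u i) q := ((AA_smooth u hu i).differentiable (by simp)).differentiableAt
  have hUd : ∀ k, DifferentiableAt ℝ (UU u k) q := fun k =>
    ((UU_smooth u hu k).differentiable (by simp)).differentiableAt
  have hDUd : ∀ j k, DifferentiableAt ℝ (DD (ee j) (UU u k)) q := fun j k =>
    ((DD_smooth (UU_smooth u hu k) (ee j)).differentiable (by simp)).differentiableAt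
  have hsumd : DifferentiableAt ℝ (fun q => ∑ j, UU u j q * DD (ee j) (UU u i) q) q := by
    apply DifferentiableAt.fun_sum
    intro j _
    exact (hUd j).mul (hDUd j i)
  rw [DD_add hAd hsumd, DD_sum _ (fun j q => UU u j q * DD (ee j) (UU u i) q) (fun j _ => (hUd j).mul (hDUd j i)),
    DD_neg] at hstep
  calc DD e0 (AA u i) q
        + ∑ j, (UU u j q * DD (ee j) (AA u i) q + AA u j q * DD (ee j) (UU u i) q)
      = DD e0 (AA u i) q + ∑ j, DD e0 (fun x => UU u j x * DD (ee j) (UU u i) x) q := by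
        congr 1
        refine Finset.sum_congr rfl fun j _ => ?_
        rw [DD_mul (hUd j) (hDUd j i)]
        rw [DD_comm (UU_smooth u hu i) e0 (ee j) q]
        simp only [AA]
        ring
    _ = -DD e0 (DD (ee i) (PP p)) q := hstep
    _ = -DD (ee i) (BB p) q := congrArg Neg.neg (DD_comm hp e0 (ee i) q)

theorem E_eq_negA (hu : SmoothV u) (hp : SmoothS p)
    (heuler : ∀ t x, dtv u t x + adv (u t x) (u t) x = -grad3 (p t) x)
    (E : ℝ → V3 → V3)
    (hE : ∀ t x, E t x = curl3 (u t) x ⨯₃ u t x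
      + grad3 (fun y => p t y + (1 / 2) * (u t y ⬝ᵥ u t y)) x) :
    ∀ t x i, E t x i = -AA u i (t, x) := by
  intro t x i
  have hUsl : ∀ k, DifferentiableAt ℝ (fun y => u t y k) x := fun k =>
    (((UU_smooth u hu k).comp (contDiff_const.prodMk contDiff_id)).differentiable (by simp)).differentiableAt
  have hPsl : DifferentiableAt ℝ (fun y => p t y) x :=
    ((hp.comp (contDiff_const.prodMk contDiff_id)).differentiable (by simp)).differentiableAt
  have hUd : ∀ k, DifferentiableAt ℝ (UU u k) (t, x) :=
    fun k => ((UU_smooth u hu k).differentiable (by simp)).differentiableAt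
  have hPd : DifferentiableAt ℝ (PP p) (t, x) := (hp.differentiable (by simp)).differentiableAt
  have hpdU : ∀ j k, pd j (fun y => u t y k) x = DD (ee j) (UU u k) (t, x) := fun j k =>
    pd_eq_DD (hUd k) j
  have hpdP : ∀ j, pd j (fun y => p t y) x = DD (ee j) (PP p) (t, x) := fun j =>
    pd_eq_DD hPd j
  have hgrad : ∀ j, pd j (fun y => p t y + (1 / 2) * (u t y ⬝ᵥ u t y)) x
      = DD (ee j) (PP p) (t, x) + ∑ k, u t x k * DD (ee j) (UU u k) (t, x) := by
    intro j
    have hsq : ∀ k, DifferentiableAt ℝ (fun y => u t y k * u t y k) x :=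
      fun k => (hUsl k).mul (hUsl k)
    have hdot : DifferentiableAt ℝ (fun y => (1/2 : ℝ) * ∑ k, u t y k * u t y k) x :=
      ((DifferentiableAt.fun_sum (fun k _ => hsq k)).const_mul _)
    have e1 : (fun y => p t y + (1 / 2) * (u t y ⬝ᵥ u t y))
        = fun y => p t y + (1/2 : ℝ) * ∑ k, u t y k * u t y k := by
      funext y; simp [dotProduct]
    rw [e1]
    have : pd j (fun y => p t y + (1/2 : ℝ) * ∑ k, u t y k * u t y k) x
        = DD (Pi.single j 1) (fun y => p t y + (1/2 : ℝ) * ∑ k, u t y k * u t y k) x := rfl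
    rw [this, DD_add hPsl hdot]
    have h2 : DD (Pi.single j 1) (fun y => (1/2 : ℝ) * ∑ k, u t y k * u t y k) x
        = ∑ k, u t x k * DD (Pi.single j 1) (fun y => u t y k) x := by
      have hc : DifferentiableAt ℝ (fun _ : V3 => (1/2 : ℝ)) x := differentiableAt_const _
      rw [DD_mul hc (DifferentiableAt.fun_sum (fun k _ => hsq k)),
        DD_sum Finset.univ (fun k => fun y => u t y k * u t y k) (fun k _ => hsq k)]
      have hck : ∀ k, DD (Pi.single j 1) (fun y => u t y k * u t y k) x
          = 2 * (u t x k * DD (Pi.single j 1) (fun y => u t y k) x) := by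
        intro k; rw [DD_mul (hUsl k) (hUsl k)]; ring
      rw [Finset.sum_congr rfl fun k _ => hck k]
      have hdc : DD (Pi.single j 1) (fun _ : V3 => (1/2 : ℝ)) x = 0 := by
        simp [DD]
      rw [hdc, Finset.mul_sum]
      simp only [mul_zero, add_zero]
      refine Finset.sum_congr rfl fun k _ => by ring
    rw [h2]
    congr 1
    · exact hpdP j
    · exact Finset.sum_congr rfl fun k _ => by rw [show DD (Pi.single j 1) (fun y => u t y k) x = pd j (fun y => u t y k) x from rfl, hpdU j k]
  have heul := eulerJ u p hu hp heuler (t, x) i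
  rw [hE]
  simp only [Pi.add_apply]
  rw [show grad3 (fun y => p t y + 1 / 2 * (u t y ⬝ᵥ u t y)) x i
      = pd i (fun y => p t y + 1 / 2 * (u t y ⬝ᵥ u t y)) x from rfl, hgrad i]
  have hUeq : ∀ k, UU u k (t, x) = u t x k := fun k => rfl
  have key : (curl3 (u t) x ⨯₃ u t x) i + ∑ k, u t x k * DD (ee i) (UU u k) (t, x)
      = ∑ j, u t x j * DD (ee j) (UU u i) (t, x) := by
    fin_cases i <;>
      simp [curl3, crossProduct, Fin.sum_univ_three, hpdU] <;>
      ring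
  simp only [hUeq] at heul
  linarith [key, heul]

end EulerSection

section ParamSection
variable (u : ℝ → V3 → V3) (p : ℝ → V3 → ℝ) (φ : ℝ → V3 → V3) (γ : ℝ → V3)

def w1 : ℝ × ℝ := (1, 0)
def w2 : ℝ × ℝ := (0, 1)
def mγ (γ : ℝ → V3) : ℝ × ℝ → ℝ × V3 := fun w => (w.1, γ w.2)
def Fh (φ : ℝ → V3 → V3) (γ : ℝ → V3) (i : Fin 3) : ℝ × ℝ → ℝ := fun w => φ w.1 (γ w.2) i
def Fhv (φ : ℝ → V3 → V3) (γ : ℝ → V3) : ℝ × ℝ → V3 := fun w => φ w.1 (γ w.2)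
def GG (φ : ℝ → V3 → V3) (γ : ℝ → V3) : ℝ × ℝ → ℝ × V3 := fun w => (w.1, φ w.1 (γ w.2))

theorem mγ_smooth (hγ : ContDiff ℝ (⊤ : ℕ∞) γ) : ContDiff ℝ (⊤ : ℕ∞) (mγ γ) := contDiff_fst.prodMk (hγ.comp contDiff_snd)

theorem Fhv_smooth (hφ : SmoothV φ) (hγ : ContDiff ℝ (⊤ : ℕ∞) γ) : ContDiff ℝ (⊤ : ℕ∞) (Fhv φ γ) := hφ.comp (mγ_smooth γ hγ)

theorem Fh_smooth (hφ : SmoothV φ) (hγ : ContDiff ℝ (⊤ : ℕ∞) γ) (i : Fin 3) : ContDiff ℝ (⊤ : ℕ∞) (Fh φ γ i) :=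
  contDiff_pi.mp (Fhv_smooth φ γ hφ hγ) i

theorem GG_smooth (hφ : SmoothV φ) (hγ : ContDiff ℝ (⊤ : ℕ∞) γ) : ContDiff ℝ (⊤ : ℕ∞) (GG φ γ) := contDiff_fst.prodMk (Fhv_smooth φ γ hφ hγ)

theorem mγ_hasFDeriv (hγ : ContDiff ℝ (⊤ : ℕ∞) γ) (w : ℝ × ℝ) :
    HasFDerivAt (mγ γ) ((ContinuousLinearMap.fst ℝ ℝ ℝ).prod
      ((fderiv ℝ γ w.2).comp (ContinuousLinearMap.snd ℝ ℝ ℝ))) w := by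
  refine (hasFDerivAt_fst).prodMk ?_
  exact ((hγ.differentiable (by simp) w.2).hasFDerivAt).comp w (hasFDerivAt_snd)

theorem GG_hasFDeriv (hφ : SmoothV φ) (hγ : ContDiff ℝ (⊤ : ℕ∞) γ) (w : ℝ × ℝ) :
    HasFDerivAt (GG φ γ) ((ContinuousLinearMap.fst ℝ ℝ ℝ).prod (fderiv ℝ (Fhv φ γ) w)) w := by
  refine (hasFDerivAt_fst).prodMk ?_
  exact ((Fhv_smooth φ γ hφ hγ).differentiable (by simp) w).hasFDerivAt

theorem flowJ (hφ : SmoothV φ) (hflow : ∀ t x, dtv φ t x = u t (φ t x)) (t : ℝ) (x : V3) (i : Fin 3) :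
    DD e0 (UU φ i) (t, x) = UU u i (t, φ t x) := by
  have h := congrFun (hflow t x) i
  have : dtv φ t x i = DD e0 (UU φ i) (t, x) :=
    deriv_time_eq_DD (((UU_smooth φ hφ i).differentiable (by simp)).differentiableAt)
  rw [this] at h
  exact h

theorem P1 (hφ : SmoothV φ) (hγ : ContDiff ℝ (⊤ : ℕ∞) γ) (hflow : ∀ t x, dtv φ t x = u t (φ t x)) (w : ℝ × ℝ) (i : Fin 3) :
    DD w1 (Fh φ γ i) w = UU u i (GG φ γ w) := by
  have hUd : DifferentiableAt ℝ (UU φ i) (mγ γ w) :=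
    ((UU_smooth φ hφ i).differentiable (by simp)).differentiableAt
  have hmd : DifferentiableAt ℝ (mγ γ) w := (mγ_hasFDeriv γ hγ w).differentiableAt
  have hch := DD_chain (f := UU φ i) (G := mγ γ) hUd hmd w1
  have hfd : fderiv ℝ (mγ γ) w w1 = e0 := by
    rw [(mγ_hasFDeriv γ hγ w).fderiv]
    simp [w1, e0]
  have : DD w1 (Fh φ γ i) w = DD w1 (fun x => UU φ i (mγ γ x)) w := rfl
  rw [this, hch, hfd]
  exact flowJ u φ hφ hflow w.1 (γ w.2) i

theorem fderiv_Fhv_apply (hφ : SmoothV φ) (hγ : ContDiff ℝ (⊤ : ℕ∞) γ) (w : ℝ × ℝ) (v : ℝ × ℝ) (i : Fin 3) :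
    fderiv ℝ (Fhv φ γ) w v i = DD v (Fh φ γ i) w := by
  have := comp_fderiv_proj (G := Fhv φ γ) (q := w)
    (((Fhv_smooth φ γ hφ hγ).differentiable (by simp)).differentiableAt) i v
  rw [← this]; rfl

theorem fderiv_GG_w1 (hu : SmoothV u) (hφ : SmoothV φ) (hγ : ContDiff ℝ (⊤ : ℕ∞) γ) (hflow : ∀ t x, dtv φ t x = u t (φ t x)) (w : ℝ × ℝ) :
    fderiv ℝ (GG φ γ) w w1 = ((1 : ℝ), fun i => UU u i (GG φ γ w)) := by
  rw [(GG_hasFDeriv φ γ hφ hγ w).fderiv]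
  refine Prod.ext ?_ ?_
  · simp [w1]
  · funext i
    have := fderiv_Fhv_apply φ γ hφ hγ w w1 i
    simpa [this] using P1 u φ γ hφ hγ hflow w i

theorem fderiv_GG_w2 (hφ : SmoothV φ) (hγ : ContDiff ℝ (⊤ : ℕ∞) γ) (w : ℝ × ℝ) :
    fderiv ℝ (GG φ γ) w w2 = ((0 : ℝ), fun i => DD w2 (Fh φ γ i) w) := by
  rw [(GG_hasFDeriv φ γ hφ hγ w).fderiv]
  refine Prod.ext ?_ ?_
  · simp [w2]
  · funext i
    exact fderiv_Fhv_apply φ γ hφ hγ w w2 i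

theorem P2a (hu : SmoothV u) (hφ : SmoothV φ) (hγ : ContDiff ℝ (⊤ : ℕ∞) γ) (hflow : ∀ t x, dtv φ t x = u t (φ t x)) {f : ℝ × V3 → ℝ} (hf : ContDiff ℝ (⊤ : ℕ∞) f) (w : ℝ × ℝ) :
    DD w1 (fun w' => f (GG φ γ w')) w
      = DD e0 f (GG φ γ w) + ∑ j, UU u j (GG φ γ w) * DD (ee j) f (GG φ γ w) := by
  rw [DD_chain ((hf.differentiable (by simp)).differentiableAt)
    ((GG_smooth φ γ hφ hγ).differentiable (by simp)).differentiableAt w1,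
    fderiv_GG_w1 u φ γ hu hφ hγ hflow w, DD_decomp]
  ring

theorem P2b (hφ : SmoothV φ) (hγ : ContDiff ℝ (⊤ : ℕ∞) γ) {f : ℝ × V3 → ℝ} (hf : ContDiff ℝ (⊤ : ℕ∞) f) (w : ℝ × ℝ) :
    DD w2 (fun w' => f (GG φ γ w')) w
      = ∑ j, DD w2 (Fh φ γ j) w * DD (ee j) f (GG φ γ w) := by
  rw [DD_chain ((hf.differentiable (by simp)).differentiableAt)
    ((GG_smooth φ γ hφ hγ).differentiable (by simp)).differentiableAt w2,
    fderiv_GG_w2 φ γ hφ hγ w, DD_decomp]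
  ring

theorem P3 (hu : SmoothV u) (hφ : SmoothV φ) (hγ : ContDiff ℝ (⊤ : ℕ∞) γ) (hflow : ∀ t x, dtv φ t x = u t (φ t x)) (w : ℝ × ℝ) (i : Fin 3) :
    DD w1 (DD w2 (Fh φ γ i)) w
      = ∑ j, DD w2 (Fh φ γ j) w * DD (ee j) (UU u i) (GG φ γ w) := by
  rw [DD_comm (Fh_smooth φ γ hφ hγ i) w1 w2 w]
  have hP1 : DD w1 (Fh φ γ i) = fun w' => UU u i (GG φ γ w') :=
    funext fun w' => P1 u φ γ hφ hγ hflow w' i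
  rw [hP1]
  exact P2b φ γ hφ hγ (UU_smooth u hu i) w

def gI (u φ : ℝ → V3 → V3) (γ : ℝ → V3) : ℝ × ℝ → ℝ :=
  fun w => -∑ i, AA u i (GG φ γ w) * DD w2 (Fh φ γ i) w
def hI (p : ℝ → V3 → ℝ) (φ : ℝ → V3 → V3) (γ : ℝ → V3) : ℝ × ℝ → ℝ :=
  fun w => BB p (GG φ γ w)
def KI (u φ : ℝ → V3 → V3) (γ : ℝ → V3) : ℝ × ℝ → ℝ :=
  fun w => ∑ i, (∑ j, AA u j (GG φ γ w)
      * (DD (ee j) (UU u i) (GG φ γ w) - DD (ee i) (UU u j) (GG φ γ w)))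
    * DD w2 (Fh φ γ i) w

theorem gI_smooth (hu : SmoothV u) (hφ : SmoothV φ) (hγ : ContDiff ℝ (⊤ : ℕ∞) γ) : ContDiff ℝ (⊤ : ℕ∞) (gI u φ γ) := by
  have : ∀ i : Fin 3, ContDiff ℝ (⊤ : ℕ∞) (fun w => AA u i (GG φ γ w) * DD w2 (Fh φ γ i) w) :=
    fun i => ((AA_smooth u hu i).comp (GG_smooth φ γ hφ hγ)).mul
      (DD_smooth (Fh_smooth φ γ hφ hγ i) w2)
  exact (ContDiff.sum fun i _ => this i).neg

theorem hI_smooth (hp : SmoothS p) (hφ : SmoothV φ) (hγ : ContDiff ℝ (⊤ : ℕ∞) γ) : ContDiff ℝ (⊤ : ℕ∞) (hI p φ γ) :=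
  (BB_smooth p hp).comp (GG_smooth φ γ hφ hγ)

theorem KI_smooth (hu : SmoothV u) (hφ : SmoothV φ) (hγ : ContDiff ℝ (⊤ : ℕ∞) γ) : ContDiff ℝ (⊤ : ℕ∞) (KI u φ γ) := by
  refine ContDiff.sum fun i _ => ContDiff.mul (ContDiff.sum fun j _ => ContDiff.mul ?_ ?_) ?_
  · exact (AA_smooth u hu j).comp (GG_smooth φ γ hφ hγ)
  · exact (((DD_smooth (UU_smooth u hu i) (ee j)).comp (GG_smooth φ γ hφ hγ))).sub
      (((DD_smooth (UU_smooth u hu j) (ee i)).comp (GG_smooth φ γ hφ hγ)))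
  · exact DD_smooth (Fh_smooth φ γ hφ hγ i) w2

theorem main_identity (hu : SmoothV u) (hp : SmoothS p) (hφ : SmoothV φ) (hγ : ContDiff ℝ (⊤ : ℕ∞) γ) (hflow : ∀ t x, dtv φ t x = u t (φ t x))
    (heuler : ∀ t x, dtv u t x + adv (u t x) (u t) x = -grad3 (p t) x) (w : ℝ × ℝ) :
    DD w1 (gI u φ γ) w = KI u φ γ w + DD w2 (hI p φ γ) w := by
  have hAc : ∀ i : Fin 3, DifferentiableAt ℝ (fun w' => AA u i (GG φ γ w')) w :=
    fun i => (((AA_smooth u hu i).comp (GG_smooth φ γ hφ hγ)).differentiable (by simp)).differentiableAt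
  have hvd : ∀ i : Fin 3, DifferentiableAt ℝ (DD w2 (Fh φ γ i)) w :=
    fun i => ((DD_smooth (Fh_smooth φ γ hφ hγ i) w2).differentiable (by simp)).differentiableAt
  have step1 : DD w1 (gI u φ γ) w
      = -∑ i, (AA u i (GG φ γ w) * DD w1 (DD w2 (Fh φ γ i)) w
        + DD w2 (Fh φ γ i) w * DD w1 (fun w' => AA u i (GG φ γ w')) w) := by
    have e : gI u φ γ = fun w' => -∑ i, (fun w'' => AA u i (GG φ γ w'') * DD w2 (Fh φ γ i) w'') w' := rfl
    rw [e, DD_neg, DD_sum _ (fun i w'' => AA u i (GG φ γ w'') * DD w2 (Fh φ γ i) w'') (fun i _ => (hAc i).mul (hvd i))]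
    congr 1
    exact Finset.sum_congr rfl fun i _ => DD_mul (hAc i) (hvd i) w1
  rw [step1]
  have e3 : ∀ i, DD w1 (DD w2 (Fh φ γ i)) w
      = ∑ j, DD w2 (Fh φ γ j) w * DD (ee j) (UU u i) (GG φ γ w) :=
    fun i => P3 u φ γ hu hφ hγ hflow w i
  have e2 : ∀ i, DD w1 (fun w' => AA u i (GG φ γ w')) w
      = DD e0 (AA u i) (GG φ γ w) + ∑ j, UU u j (GG φ γ w) * DD (ee j) (AA u i) (GG φ γ w) :=
    fun i => P2a u φ γ hu hφ hγ hflow (AA_smooth u hu i) w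
  have eB : DD w2 (hI p φ γ) w
      = ∑ j, DD w2 (Fh φ γ j) w * DD (ee j) (BB p) (GG φ γ w) :=
    P2b φ γ hφ hγ (BB_smooth p hp) w
  have heq := fun i => eulerJ_t u p hu hp heuler (GG φ γ w) i
  simp only [e3, e2, eB, KI, Fin.sum_univ_three]
  simp only [Fin.sum_univ_three] at heq
  linear_combination (-(DD w2 (Fh φ γ 0) w)) * heq 0
    + (-(DD w2 (Fh φ γ 1) w)) * heq 1 + (-(DD w2 (Fh φ γ 2) w)) * heq 2

theorem derivFh (hφ : SmoothV φ) (hγ : ContDiff ℝ (⊤ : ℕ∞) γ) (t s : ℝ) :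
    deriv (fun s' => φ t (γ s')) s = fun i => DD w2 (Fh φ γ i) (t, s) := by
  have hσ : HasDerivAt (fun s' : ℝ => ((t, s') : ℝ × ℝ)) (((0:ℝ), (1:ℝ)) : ℝ × ℝ) s :=
    (hasDerivAt_const s t).prodMk (hasDerivAt_id s)
  have hd : HasDerivAt (fun s' => Fhv φ γ (t, s')) (fderiv ℝ (Fhv φ γ) (t, s) w2) s := by
    have := (((Fhv_smooth φ γ hφ hγ).differentiable (by simp)).differentiableAt
      (x := ((t, s) : ℝ × ℝ))).hasFDerivAt.comp_hasDerivAt s hσ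
    exact this
  have : deriv (fun s' => φ t (γ s')) s = fderiv ℝ (Fhv φ γ) (t, s) w2 := hd.deriv
  rw [this]
  funext i
  exact fderiv_Fhv_apply φ γ hφ hγ (t, s) w2 i

end ParamSection

/-- circulation theorem for the Bernoulli vector. -/
theorem stmt18
    (u : ℝ → V3 → V3) (p : ℝ → V3 → ℝ)
    (hu : SmoothV u) (hp : SmoothS p)
    (hdiv : ∀ t x, div3 (u t) x = 0)
    (heuler : ∀ t x, dtv u t x + adv (u t x) (u t) x = -grad3 (p t) x)
    (E : ℝ → V3 → V3)
    (hE : ∀ t x, E t x = curl3 (u t) x ⨯₃ u t x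
      + grad3 (fun y => p t y + (1 / 2) * (u t y ⬝ᵥ u t y)) x)
    (φ : ℝ → V3 → V3) (hφ : SmoothV φ)
    (hflow : ∀ t x, dtv φ t x = u t (φ t x))
    (γ : ℝ → V3) (hγ : ContDiff ℝ (⊤ : ℕ∞) γ)
    (hγclosed : γ 0 = γ 1) (hγ'closed : deriv γ 0 = deriv γ 1)
    (C : ℝ → ℝ)
    (hC : ∀ t, C t = ∫ s in (0 : ℝ)..1,
      E t (φ t (γ s)) ⬝ᵥ deriv (fun s' => φ t (γ s')) s) :
    ∀ t, HasDerivAt C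
      (∫ s in (0 : ℝ)..1,
        (E t (φ t (γ s)) ⨯₃ curl3 (u t) (φ t (γ s))) ⬝ᵥ deriv (fun s' => φ t (γ s')) s) t := by
  intro t0
  -- bridge E to -AA
  have hEA := E_eq_negA u p hu hp heuler E hE
  -- the moving integrand equals gI
  have hg_int : ∀ t s : ℝ, E t (φ t (γ s)) ⬝ᵥ deriv (fun s' => φ t (γ s')) s = gI u φ γ (t, s) := by
    intro t s
    rw [derivFh φ γ hφ hγ t s]
    simp only [dotProduct, gI]
    rw [← Finset.sum_neg_distrib]
    refine Finset.sum_congr rfl fun i _ => ?_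
    rw [hEA t (φ t (γ s)) i, show GG φ γ (t, s) = ((t, φ t (γ s)) : ℝ × V3) from rfl]
    ring
  -- the target integrand equals KI
  have hK_int : ∀ t s : ℝ, (E t (φ t (γ s)) ⨯₃ curl3 (u t) (φ t (γ s))) ⬝ᵥ deriv (fun s' => φ t (γ s')) s = KI u φ γ (t, s) := by
    intro t s
    rw [derivFh φ γ hφ hγ t s]
    have hUd : ∀ k, DifferentiableAt ℝ (UU u k) ((t, φ t (γ s)) : ℝ × V3) :=
      fun k => ((UU_smooth u hu k).differentiable (by simp)).differentiableAt
    have hpdU : ∀ j k, pd j (fun y => u t y k) (φ t (γ s)) = DD (ee j) (UU u k) (t, φ t (γ s)) :=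
      fun j k => pd_eq_DD (hUd k) j
    have hEA' : ∀ i, E t (φ t (γ s)) i = -AA u i (t, φ t (γ s)) := fun i => hEA t (φ t (γ s)) i
    simp only [KI, Fin.sum_univ_three]
    simp [curl3, crossProduct, dotProduct, Fin.sum_univ_three, hpdU, hEA', GG]
    ring
  -- rewrite C
  have hCeq : C = fun t => ∫ s in (0:ℝ)..1, gI u φ γ (t, s) := by
    funext t
    rw [hC t]
    exact intervalIntegral.integral_congr fun s _ => hg_int t s
  -- continuity facts
  have hgc : Continuous (gI u φ γ) := (gI_smooth u φ γ hu hφ hγ).continuous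
  have hg'c : Continuous (DD w1 (gI u φ γ)) :=
    (DD_smooth (gI_smooth u φ γ hu hφ hγ) w1).continuous
  have hKc : Continuous (KI u φ γ) := (KI_smooth u φ γ hu hφ hγ).continuous
  have hhc : Continuous (DD w2 (hI p φ γ)) :=
    (DD_smooth (hI_smooth p φ γ hp hφ hγ) w2).continuous
  -- derivative under the integral sign
  have hcomp : IsCompact ((Metric.closedBall t0 1) ×ˢ (Set.uIcc (0:ℝ) 1)) :=
    (isCompact_closedBall t0 1).prod isCompact_uIcc
  obtain ⟨M, hM⟩ := hcomp.exists_bound_of_continuousOn hg'c.continuousOn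
  have hDI : HasDerivAt (fun t => ∫ s in (0:ℝ)..1, gI u φ γ (t, s))
      (∫ s in (0:ℝ)..1, DD w1 (gI u φ γ) (t0, s)) t0 := by
    have := (intervalIntegral.hasDerivAt_integral_of_dominated_loc_of_deriv_le
      (F := fun t s => gI u φ γ (t, s)) (F' := fun t s => DD w1 (gI u φ γ) (t, s))
      (x₀ := t0) (a := 0) (b := 1) (bound := fun _ => M) (μ := MeasureTheory.volume)
      (s := Metric.ball t0 1) (Metric.ball_mem_nhds t0 one_pos)
      (Filter.Eventually.of_forall fun x =>
        ((hgc.comp (continuous_const.prodMk continuous_id)).aestronglyMeasurable))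
      ((hgc.comp (continuous_const.prodMk continuous_id)).intervalIntegrable 0 1)
      ((hg'c.comp (continuous_const.prodMk continuous_id)).aestronglyMeasurable)
      (MeasureTheory.ae_of_all _ fun s hs x hx => by
        refine hM (x, s) ?_
        refine Set.mk_mem_prod (Metric.ball_subset_closedBall hx) ?_
        exact Set.uIoc_subset_uIcc hs)
      (intervalIntegrable_const)
      (MeasureTheory.ae_of_all _ fun s _ x _ =>
        hasDerivAt_fst' (((gI_smooth u φ γ hu hφ hγ).differentiable (by simp)).differentiableAt)))
    exact this.2
  -- split the derivative integral
  have int1 : IntervalIntegrable (fun s => KI u φ γ (t0, s)) MeasureTheory.volume 0 1 :=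
    (hKc.comp (continuous_const.prodMk continuous_id)).intervalIntegrable 0 1
  have int2 : IntervalIntegrable (fun s => DD w2 (hI p φ γ) (t0, s)) MeasureTheory.volume 0 1 :=
    (hhc.comp (continuous_const.prodMk continuous_id)).intervalIntegrable 0 1
  have hsplit : (∫ s in (0:ℝ)..1, DD w1 (gI u φ γ) (t0, s))
      = (∫ s in (0:ℝ)..1, KI u φ γ (t0, s)) + ∫ s in (0:ℝ)..1, DD w2 (hI p φ γ) (t0, s) := by
    rw [← intervalIntegral.integral_add int1 int2]
    exact intervalIntegral.integral_congr fun s _ =>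
      main_identity u p φ γ hu hp hφ hγ hflow heuler (t0, s)
  have hzero : (∫ s in (0:ℝ)..1, DD w2 (hI p φ γ) (t0, s)) = 0 := by
    simp only [show w2 = (((0:ℝ), (1:ℝ)) : ℝ × ℝ) from rfl]
    rw [intervalIntegral.integral_eq_sub_of_hasDerivAt
      (f := fun s => hI p φ γ (t0, s))
      (fun s _ => hasDerivAt_snd'
        (((hI_smooth p φ γ hp hφ hγ).differentiable (by simp)).differentiableAt)) int2]
    have : hI p φ γ (t0, 1) = hI p φ γ (t0, 0) := by
      show BB p (t0, φ t0 (γ 1)) = BB p (t0, φ t0 (γ 0))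
      rw [hγclosed]
    rw [this, sub_self]
  have hfinal : (∫ s in (0:ℝ)..1,
        (E t0 (φ t0 (γ s)) ⨯₃ curl3 (u t0) (φ t0 (γ s))) ⬝ᵥ deriv (fun s' => φ t0 (γ s')) s)
      = ∫ s in (0:ℝ)..1, DD w1 (gI u φ γ) (t0, s) := by
    rw [hsplit, hzero, add_zero]
    exact intervalIntegral.integral_congr fun s _ => hK_int t0 s
  rw [hCeq, hfinal]
  exact hDI
end
end
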